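/- arXiv:2408.17381 — 3 statements merged into one kernel-verified Lean document; each statement's English description precedes it below -/
import Mathlib

section
/- Fix ρ ∈ (0,1). There exists a constant C > 0, depending only on ρ, such that for every bounded open set E ⊂ ℝ² of diameter h_E that is shape-regular with parameter ρ, and every v : ℝ² → ℝ of class C¹ on an open neighborhood of the closure of E, the following scaled trace inequality holds: ∫_{∂E} v(x)² dH¹(x) ≤ C · ( h_E^{-1} ∫_E v(x)² dx + h_E ∫_E ‖∇v(x)‖² dx ). -/
open MeasureTheory Metric Set Real

noncomputable section




/-- Indicator of a continuous-on function is measurable. -/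
theorem aux_measurable_indicator {X : Type*} [MeasurableSpace X] [TopologicalSpace X]
    [OpensMeasurableSpace X] {s : Set X} (hs : MeasurableSet s) {f : X → ℝ}
    (hf : ContinuousOn f s) : Measurable (s.indicator f) := by
  classical
  have : s.indicator f = s.piecewise f (fun _ => 0) := by
    ext x; by_cases hx : x ∈ s <;> simp [Set.indicator, Set.piecewise, hx]
  rw [this]
  exact ContinuousOn.measurable_piecewise hf continuousOn_const hs

/-- lintegral version of the polar coordinates change of variables. -/
theorem aux_lintegral_polar (g : ℝ × ℝ → ENNReal) :
    (∫⁻ p in polarCoord.target, ENNReal.ofReal p.1 * g (polarCoord.symm p)) = ∫⁻ p, g p := by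
  set B : ℝ × ℝ → ℝ × ℝ →L[ℝ] ℝ × ℝ := fun p =>
    LinearMap.toContinuousLinearMap (Matrix.toLin (Module.Basis.finTwoProd ℝ) (Module.Basis.finTwoProd ℝ)
      !![Real.cos p.2, -p.1 * Real.sin p.2; Real.sin p.2, p.1 * Real.cos p.2])
  have A : ∀ p ∈ polarCoord.target, HasFDerivWithinAt polarCoord.symm (B p) polarCoord.target p :=
    fun p _ => (hasFDerivAt_polarCoord_symm p).hasFDerivWithinAt
  have B_det : ∀ p, (B p).det = p.1 := by
    intro p
    conv_rhs => rw [← one_mul p.1, ← Real.cos_sq_add_sin_sq p.2]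
    simp only [B, neg_mul, LinearMap.det_toContinuousLinearMap, LinearMap.det_toLin,
      Matrix.det_fin_two_of, sub_neg_eq_add]
    ring
  have hinj : Set.InjOn polarCoord.symm polarCoord.target := by
    have := polarCoord.symm.injOn
    rwa [OpenPartialHomeomorph.symm_source] at this
  have himg : polarCoord.symm '' polarCoord.target = polarCoord.source :=
    polarCoord.symm_image_target_eq_source
  calc ∫⁻ p in polarCoord.target, ENNReal.ofReal p.1 * g (polarCoord.symm p)
      = ∫⁻ p in polarCoord.target, ENNReal.ofReal |(B p).det| * g (polarCoord.symm p) := by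
        apply setLIntegral_congr_fun polarCoord.open_target.measurableSet
        intro p hp
        dsimp only
        rw [B_det, abs_of_pos hp.1]
    _ = ∫⁻ x in polarCoord.symm '' polarCoord.target, g x :=
        (lintegral_image_eq_lintegral_abs_det_fderiv_mul volume
          polarCoord.open_target.measurableSet A hinj g).symm
    _ = ∫⁻ x in polarCoord.source, g x := by rw [himg]
    _ = ∫⁻ x, g x := by
        rw [← setLIntegral_univ (μ := volume) g]
        exact setLIntegral_congr polarCoord_source_ae_eq_univ





abbrev X2 := EuclideanSpace ℝ (Fin 2)

/-- The identification of `ℝ × ℝ` with the Euclidean plane. -/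
def iota (p : ℝ × ℝ) : X2 := (MeasurableEquiv.toLp 2 (Fin 2 → ℝ))
  (MeasurableEquiv.finTwoArrow.symm p)

theorem iota_apply (p : ℝ × ℝ) : iota p = ![p.1, p.2] := rfl

theorem iota_measurePreserving : MeasurePreserving iota := by
  exact ((EuclideanSpace.volume_preserving_symm_measurableEquiv_toLp (Fin 2)).symm _).comp
    ((volume_preserving_finTwoArrow ℝ).symm _)

theorem iota_smul (t x y : ℝ) : t • iota (x, y) = iota (t * x, t * y) := by
  ext i
  fin_cases i <;> rfl

theorem iota_continuous : Continuous iota := by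
  apply (PiLp.continuous_toLp _ _).comp
  apply continuous_pi
  intro i
  fin_cases i
  · exact continuous_fst
  · exact continuous_snd

theorem iota_norm (p : ℝ × ℝ) : ‖iota p‖ = Real.sqrt (p.1 ^ 2 + p.2 ^ 2) := by
  rw [EuclideanSpace.norm_eq]
  simp [Fin.sum_univ_two, iota_apply]

/-- unit vector at angle θ -/
def uvec (θ : ℝ) : X2 := iota (Real.cos θ, Real.sin θ)

theorem uvec_norm (θ : ℝ) : ‖uvec θ‖ = 1 := by
  rw [uvec, iota_norm]
  have : Real.cos θ ^ 2 + Real.sin θ ^ 2 = 1 := Real.cos_sq_add_sin_sq θ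
  rw [this, Real.sqrt_one]

theorem uvec_lipschitz : LipschitzWith 1 uvec := by
  apply LipschitzWith.of_dist_le_mul
  intro a b
  rw [NNReal.coe_one, one_mul, dist_eq_norm, Real.dist_eq]
  have : uvec a - uvec b = iota (Real.cos a - Real.cos b, Real.sin a - Real.sin b) := by
    ext i; fin_cases i <;> rfl
  rw [this, iota_norm]
  have h1 : (Real.cos a - Real.cos b) ^ 2 + (Real.sin a - Real.sin b) ^ 2
      = 2 - 2 * Real.cos (a - b) := by
    have ha := Real.sin_sq_add_cos_sq a
    have hb := Real.sin_sq_add_cos_sq b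
    rw [Real.cos_sub]; nlinarith [ha, hb]
  rw [h1]
  have h2 : 2 - 2 * Real.cos (a - b) ≤ (a - b) ^ 2 := by
    have := Real.one_sub_sq_div_two_le_cos (x := a - b)
    nlinarith
  calc Real.sqrt (2 - 2 * Real.cos (a - b)) ≤ Real.sqrt ((a - b) ^ 2) := Real.sqrt_le_sqrt h2
    _ = |a - b| := by rw [Real.sqrt_sq_eq_abs]

/-- every nonzero vector is a positive multiple of some `uvec θ` with `θ ∈ [-π, π]`. -/
theorem uvec_surj (u : X2) (hu : u ≠ 0) :
    ∃ θ ∈ Icc (-π) π, u = ‖u‖ • uvec θ := by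
  set w : ℂ := ⟨u 0, u 1⟩ with hw
  have hw0 : w ≠ 0 := by
    intro h
    apply hu
    have h0 : u 0 = 0 := congrArg Complex.re h
    have h1 : u 1 = 0 := congrArg Complex.im h
    ext i; fin_cases i <;> assumption
  have habs : ‖w‖ = ‖u‖ := by
    rw [Complex.norm_def, Complex.normSq_apply, EuclideanSpace.norm_eq]
    simp [Fin.sum_univ_two, sq]
    rfl
  refine ⟨Complex.arg w, ⟨le_of_lt (Complex.neg_pi_lt_arg w), Complex.arg_le_pi w⟩, ?_⟩
  have hcos := Complex.cos_arg hw0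
  have hsin := Complex.sin_arg w
  have hn : ‖u‖ ≠ 0 := by simpa [← habs] using (norm_ne_zero_iff.mpr hw0)
  ext i
  fin_cases i
  · show u 0 = (‖u‖ • uvec (Complex.arg w)) 0
    have : (‖u‖ • uvec (Complex.arg w)) 0 = ‖u‖ * Real.cos (Complex.arg w) := rfl
    rw [this, hcos, habs]
    field_simp
    rfl
  · show u 1 = (‖u‖ • uvec (Complex.arg w)) 1
    have : (‖u‖ • uvec (Complex.arg w)) 1 = ‖u‖ * Real.sin (Complex.arg w) := rfl
    rw [this, hsin, habs]
    field_simp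
    rfl







section Geom

variable {E : Set X2} {z : X2} {r0 h : ℝ}

/-- interior cone property from star-shapedness. -/
theorem aux_cone (hball : closedBall z r0 ⊆ E)
    (hstar : ∀ x ∈ E, ∀ y ∈ closedBall z r0, segment ℝ x y ⊆ E)
    (hr0 : 0 < r0) :
    ∀ p ∈ closure E, ∀ b ∈ ball z r0, ∀ t ∈ Ico (0:ℝ) 1, b + t • (p - b) ∈ E := by
  intro p hp b hb t ⟨ht0, ht1⟩
  rcases eq_or_lt_of_le ht0 with rfl | ht0'
  · simpa using hball (ball_subset_closedBall hb)
  · have hbz : dist b z < r0 := mem_ball.mp hb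
    have hδ : 0 < (1 - t) * (r0 - dist b z) / t :=
      div_pos (mul_pos (by linarith) (by linarith)) ht0'
    obtain ⟨p', hp'E, hpp'⟩ := Metric.mem_closure_iff.mp hp _ hδ
    set b' : X2 := b + (t / (1 - t)) • (p - p') with hb'
    have hb'mem : b' ∈ closedBall z r0 := by
      have h1 : dist b' z ≤ dist b z + (t / (1 - t)) * dist p p' := by
        calc dist b' z ≤ dist b' b + dist b z := dist_triangle _ _ _
          _ ≤ dist b z + (t / (1 - t)) * dist p p' := by
              rw [dist_eq_norm]
              have : b' - b = (t / (1 - t)) • (p - p') := by rw [hb']; abel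
              rw [this, norm_smul, ← dist_eq_norm]
              rw [Real.norm_eq_abs, abs_of_nonneg (div_nonneg ht0 (by linarith))]
              linarith
      have h2 : (t / (1 - t)) * dist p p' < r0 - dist b z := by
        rw [div_mul_eq_mul_div, div_lt_iff₀ (by linarith)]
        calc t * dist p p' < t * ((1 - t) * (r0 - dist b z) / t) := by
              apply mul_lt_mul_of_pos_left hpp' ht0'
          _ = (r0 - dist b z) * (1 - t) := by field_simp
      exact mem_closedBall.mpr (by linarith)
    apply hstar p' hp'E b' hb'mem
    refine ⟨t, 1 - t, le_of_lt ht0', by linarith, by ring, ?_⟩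
    rw [hb']
    have ht1' : (1 - t) ≠ 0 := by linarith
    rw [smul_add, smul_smul, mul_div_cancel₀ _ ht1']
    module


variable (z E h)

/-- The radial function of the star-shaped domain. -/
def Rad (θ : ℝ) : ℝ := sSup {t | t ∈ Icc 0 h ∧ z + t • uvec θ ∈ closure E}

variable {z E h}

section RadFacts

variable (hr0 : 0 < r0) (hr0h : r0 ≤ h)
  (hball : closedBall z r0 ⊆ E)
  (hcone : ∀ p ∈ closure E, ∀ b ∈ ball z r0, ∀ t ∈ Ico (0:ℝ) 1, b + t • (p - b) ∈ E)
  (hEc : closure E ⊆ closedBall z h)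

set_option linter.unusedSectionVars false
include hr0 hr0h hball hcone hEc

theorem Rad_mem (θ : ℝ) :
    Rad E z h θ ∈ Icc (0:ℝ) h ∧ z + Rad E z h θ • uvec θ ∈ closure E ∧ r0 ≤ Rad E z h θ := by
  set S := {t | t ∈ Icc (0:ℝ) h ∧ z + t • uvec θ ∈ closure E} with hS
  have hr0S : r0 ∈ S := by
    refine ⟨⟨le_of_lt hr0, hr0h⟩, subset_closure (hball ?_)⟩
    rw [mem_closedBall, dist_eq_norm, add_sub_cancel_left, norm_smul, uvec_norm,
      Real.norm_eq_abs, abs_of_pos hr0, mul_one]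
  have hne : S.Nonempty := ⟨r0, hr0S⟩
  have hbdd : BddAbove S := ⟨h, fun t ht => ht.1.2⟩
  have hclosed : IsClosed S := by
    have : S = Icc 0 h ∩ (fun t : ℝ => z + t • uvec θ) ⁻¹' closure E := rfl
    rw [this]
    exact isClosed_Icc.inter (IsClosed.preimage (by continuity) isClosed_closure)
  have hmem : Rad E z h θ ∈ S := hclosed.csSup_mem hne hbdd
  exact ⟨hmem.1, hmem.2, le_csSup hbdd hr0S⟩

theorem Rad_lt_mem {θ t : ℝ} (ht0 : 0 ≤ t) (htR : t < Rad E z h θ) :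
    z + t • uvec θ ∈ E := by
  obtain ⟨hIcc, hcl, hr0R⟩ := Rad_mem hr0 hr0h hball hcone hEc θ
  have hRpos : 0 < Rad E z h θ := lt_of_lt_of_le hr0 hr0R
  have := hcone (z + Rad E z h θ • uvec θ) hcl z (mem_ball_self hr0) (t / Rad E z h θ)
    ⟨div_nonneg ht0 (le_of_lt hRpos), by rwa [div_lt_one hRpos]⟩
  have heq : z + (t / Rad E z h θ) • (z + Rad E z h θ • uvec θ - z) = z + t • uvec θ := by
    rw [add_sub_cancel_left, smul_smul, div_mul_cancel₀ _ (ne_of_gt hRpos)]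
  rwa [heq] at this

theorem Rad_lip (θ₁ θ₂ : ℝ) :
    Rad E z h θ₁ ≤ Rad E z h θ₂ + (h^2 / r0) * ‖uvec θ₁ - uvec θ₂‖ := by
  obtain ⟨⟨hR10, hR1h⟩, hcl1, hr0R1⟩ := Rad_mem hr0 hr0h hball hcone hEc θ₁
  obtain ⟨⟨hR20, hR2h⟩, hcl2, hr0R2⟩ := Rad_mem hr0 hr0h hball hcone hEc θ₂
  set R1 := Rad E z h θ₁
  set R2 := Rad E z h θ₂
  set d := ‖uvec θ₁ - uvec θ₂‖ with hd
  have hd0 : 0 ≤ d := norm_nonneg _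
  have hR1pos : 0 < R1 := lt_of_lt_of_le hr0 hr0R1
  by_contra hcon
  push_neg at hcon
  set c := R1 - (h^2 / r0) * d with hc
  have hcR2 : R2 < c := by rw [hc]; linarith
  have hcR1 : c ≤ R1 := by
    rw [hc]
    have : 0 ≤ (h^2/r0) * d := mul_nonneg (div_nonneg (sq_nonneg h) (le_of_lt hr0)) hd0
    linarith
  set t := (R2 + c) / 2 with htdef
  have htR2 : R2 < t := by rw [htdef]; linarith
  have htc : t < c := by rw [htdef]; linarith
  have ht0 : 0 ≤ t := by linarith
  have htR1 : t < R1 := lt_of_lt_of_le htc hcR1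
  have hth : t ≤ h := le_trans (le_of_lt htR1) hR1h
  have hmemE : z + t • uvec θ₂ ∈ E := by
    rcases eq_or_lt_of_le hd0 with hdz | hdpos
    · have huv : uvec θ₁ = uvec θ₂ := by
        rw [← sub_eq_zero]; exact norm_eq_zero.mp hdz.symm
      rw [← huv]
      exact Rad_lt_mem hr0 hr0h hball hcone hEc ht0 htR1
    · set lam := (R1 - t) / R1 with hlam
      have hlampos : 0 < lam := div_pos (by linarith) hR1pos
      set b := z + (t / lam) • (uvec θ₂ - uvec θ₁) with hb
      have hbmem : b ∈ ball z r0 := by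
        rw [mem_ball, dist_eq_norm, hb, add_sub_cancel_left, norm_smul, Real.norm_eq_abs,
          abs_of_nonneg (div_nonneg ht0 (le_of_lt hlampos)), norm_sub_rev, ← hd]
        rw [hlam, div_div_eq_mul_div, div_mul_eq_mul_div, div_lt_iff₀ (by linarith)]
        have h1 : r0 * (R1 - t) > h^2 * d := by
          have h3 := mul_lt_mul_of_pos_left (show t < R1 - (h^2/r0)*d from htc) hr0
          have h2 : r0 * ((h^2/r0) * d) = h^2 * d := by field_simp
          nlinarith
        have h4 : t * R1 ≤ h^2 := by nlinarith
        have h5 : t * R1 * d ≤ h^2 * d := mul_le_mul_of_nonneg_right h4 hd0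
        linarith
      have hmem := hcone (z + R1 • uvec θ₁) hcl1 b hbmem (t / R1)
        ⟨div_nonneg ht0 (le_of_lt hR1pos), by rwa [div_lt_one hR1pos]⟩
      have heq : b + (t / R1) • (z + R1 • uvec θ₁ - b) = z + t • uvec θ₂ := by
        have hlamne : lam ≠ 0 := ne_of_gt hlampos
        have hR1ne : R1 ≠ 0 := ne_of_gt hR1pos
        have hRtne : R1 - t ≠ 0 := by intro hcontra; linarith [sub_eq_zero.mp hcontra]
        have expand : b + (t / R1) • (z + R1 • uvec θ₁ - b)
            = z + ((1 - t / R1) * (t / lam)) • (uvec θ₂ - uvec θ₁)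
              + ((t / R1) * R1) • uvec θ₁ := by
          rw [hb]; module
        have hkey2 : (1 - t / R1) * (t / lam) = t := by
          rw [hlam]; field_simp
        have hkey3 : (t / R1) * R1 = t := div_mul_cancel₀ _ hR1ne
        rw [expand, hkey2, hkey3]
        module
      rwa [heq] at hmem
  have : t ≤ R2 := by
    apply le_csSup ⟨h, fun u hu => hu.1.2⟩
    exact ⟨⟨ht0, hth⟩, subset_closure hmemE⟩
  linarith


theorem aux_frontier_subset (hE : IsOpen E) :
    frontier E ⊆ (fun θ => z + Rad E z h θ • uvec θ) '' (Icc (-π) π) := by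
  intro x hx
  rw [hE.frontier_eq] at hx
  obtain ⟨hxcl, hxE⟩ := hx
  have hxz : x ≠ z := by
    intro hcontra
    exact hxE (hcontra ▸ hball (mem_closedBall_self (le_of_lt hr0)))
  have hu : x - z ≠ 0 := sub_ne_zero.mpr hxz
  obtain ⟨θ, hθI, hθeq⟩ := uvec_surj (x - z) hu
  set t := ‖x - z‖ with htdef
  have hxt : x = z + t • uvec θ := by rw [← hθeq]; abel
  have ht0 : 0 ≤ t := norm_nonneg _
  have hth : t ≤ h := by
    have := hEc hxcl
    rwa [mem_closedBall, dist_eq_norm] at this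
  have htS : t ≤ Rad E z h θ := by
    apply le_csSup ⟨h, fun u hu => hu.1.2⟩
    exact ⟨⟨ht0, hth⟩, by rw [← hxt]; exact hxcl⟩
  rcases eq_or_lt_of_le htS with heq | hlt
  · exact ⟨θ, hθI, by simp only []; rw [← heq, ← hxt]⟩
  · exact absurd (hxt ▸ Rad_lt_mem hr0 hr0h hball hcone hEc ht0 hlt) hxE

theorem aux_gamma_lip :
    LipschitzWith (Real.toNNReal (h^2/r0 + h)) (fun θ => z + Rad E z h θ • uvec θ) := by
  apply LipschitzWith.of_dist_le_mul
  intro a b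
  have hRa := Rad_mem hr0 hr0h hball hcone hEc a
  have hRb := Rad_mem hr0 hr0h hball hcone hEc b
  have hlip1 := Rad_lip hr0 hr0h hball hcone hEc a b
  have hlip2 := Rad_lip hr0 hr0h hball hcone hEc b a
  rw [norm_sub_rev (uvec b)] at hlip2
  have habs : |Rad E z h a - Rad E z h b| ≤ (h^2/r0) * ‖uvec a - uvec b‖ := abs_le.mpr
    ⟨by linarith, by linarith⟩
  have huv : ‖uvec a - uvec b‖ ≤ |a - b| := by
    have := uvec_lipschitz.dist_le_mul a b
    rwa [NNReal.coe_one, one_mul, dist_eq_norm, Real.dist_eq] at this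
  have hcoe : (Real.toNNReal (h^2/r0 + h) : ℝ) = h^2/r0 + h := by
    exact Real.coe_toNNReal _
      (add_nonneg (div_nonneg (sq_nonneg h) hr0.le) (le_trans hr0.le hr0h))
  rw [dist_eq_norm, Real.dist_eq, hcoe]
  have hdecomp : z + Rad E z h a • uvec a - (z + Rad E z h b • uvec b)
      = (Rad E z h a - Rad E z h b) • uvec a + Rad E z h b • (uvec a - uvec b) := by
    module
  rw [hdecomp]
  calc ‖(Rad E z h a - Rad E z h b) • uvec a + Rad E z h b • (uvec a - uvec b)‖
      ≤ ‖(Rad E z h a - Rad E z h b) • uvec a‖ + ‖Rad E z h b • (uvec a - uvec b)‖ :=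
        norm_add_le _ _
    _ ≤ |Rad E z h a - Rad E z h b| + h * ‖uvec a - uvec b‖ := by
        rw [norm_smul, norm_smul, uvec_norm, mul_one, Real.norm_eq_abs, Real.norm_eq_abs,
          abs_of_nonneg hRb.1.1]
        have : Rad E z h b * ‖uvec a - uvec b‖ ≤ h * ‖uvec a - uvec b‖ :=
          mul_le_mul_of_nonneg_right hRb.1.2 (norm_nonneg _)
        linarith
    _ ≤ (h^2/r0) * ‖uvec a - uvec b‖ + h * ‖uvec a - uvec b‖ := by linarith
    _ ≤ (h^2/r0) * |a - b| + h * |a - b| := by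
        have h1 : (0:ℝ) ≤ h^2/r0 := by positivity
        have h2 : (0:ℝ) ≤ h := le_trans (le_of_lt hr0) hr0h
        nlinarith [abs_nonneg (a - b)]
    _ = (h^2/r0 + h) * |a - b| := by ring

end RadFacts

end Geom






theorem aux_grad_norm (v : X2 → ℝ) (x : X2) : ‖gradient v x‖ = ‖fderiv ℝ v x‖ := by
  rw [gradient]
  exact LinearIsometryEquiv.norm_map _ _

theorem aux_ftc {U : Set X2} (hU : IsOpen U) {v : X2 → ℝ} (hv : ContDiffOn ℝ 1 v U)
    {e z : X2} (he : ‖e‖ = 1) {s R h : ℝ} (hsR : s ≤ R) (hh : 0 < h)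
    (hseg : ∀ t ∈ Icc s R, z + t • e ∈ U) :
    (v (z + R • e))^2 ≤ (v (z + s • e))^2 +
      ∫ t in s..R, (h⁻¹ * (v (z + t • e))^2 + h * ‖gradient v (z + t • e)‖^2) := by
  set ℓ : ℝ → X2 := fun t => z + t • e with hℓ
  have hℓcont : Continuous ℓ := by continuity
  have hℓderiv : ∀ t : ℝ, HasDerivAt ℓ e t := by
    intro t
    have h1 : HasDerivAt (fun t : ℝ => t • e) ((1:ℝ) • e) t := (hasDerivAt_id t).smul_const e
    simpa only [one_smul] using h1.const_add z
  set D : ℝ → ℝ := fun t => 2 * v (ℓ t) * (fderiv ℝ v (ℓ t)) e with hD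
  have hdiff : ∀ t ∈ Icc s R, DifferentiableAt ℝ v (ℓ t) := fun t ht =>
    (hv.differentiableOn one_ne_zero).differentiableAt (hU.mem_nhds (hseg t ht))
  have hG : ∀ t ∈ Icc s R, HasDerivAt (fun t => (v (ℓ t))^2) (D t) t := by
    intro t ht
    have h1 : HasDerivAt (fun t => v (ℓ t)) ((fderiv ℝ v (ℓ t)) e) t :=
      (hdiff t ht).hasFDerivAt.comp_hasDerivAt t (hℓderiv t)
    have h2 := h1.fun_pow 2
    simpa [hD, mul_comm, mul_assoc, mul_left_comm] using h2
  have hmaps : MapsTo ℓ (Icc s R) U := fun t ht => hseg t ht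
  have hvℓ : ContinuousOn (fun t => v (ℓ t)) (Icc s R) :=
    hv.continuousOn.comp hℓcont.continuousOn hmaps
  have hfℓ : ContinuousOn (fun t => (fderiv ℝ v (ℓ t)) e) (Icc s R) :=
    ((hv.continuousOn_fderiv_of_isOpen hU le_rfl).comp hℓcont.continuousOn hmaps).clm_apply
      continuousOn_const
  have hDcont : ContinuousOn D (Icc s R) := by
    apply ContinuousOn.mul (continuousOn_const.mul hvℓ) hfℓ
  have hWcont : ContinuousOn
      (fun t => h⁻¹ * (v (ℓ t))^2 + h * ‖gradient v (ℓ t)‖^2) (Icc s R) := by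
    apply ContinuousOn.add
    · exact continuousOn_const.mul (hvℓ.pow 2)
    · apply continuousOn_const.mul
      have : ContinuousOn (fun t => ‖fderiv ℝ v (ℓ t)‖) (Icc s R) :=
        ((hv.continuousOn_fderiv_of_isOpen hU le_rfl).comp hℓcont.continuousOn hmaps).norm
      have heq : (fun t => ‖gradient v (ℓ t)‖^2) = fun t => ‖fderiv ℝ v (ℓ t)‖^2 := by
        funext t; rw [aux_grad_norm]
      rw [heq]
      exact this.pow 2
  have hDint : IntervalIntegrable D volume s R := by
    apply ContinuousOn.intervalIntegrable
    rwa [uIcc_of_le hsR]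
  have hWint : IntervalIntegrable
      (fun t => h⁻¹ * (v (ℓ t))^2 + h * ‖gradient v (ℓ t)‖^2) volume s R := by
    apply ContinuousOn.intervalIntegrable
    rwa [uIcc_of_le hsR]
  have hftc : (∫ t in s..R, D t) = (v (ℓ R))^2 - (v (ℓ s))^2 := by
    apply intervalIntegral.integral_eq_sub_of_hasDerivAt
    · intro t ht
      rw [uIcc_of_le hsR] at ht
      exact hG t ht
    · exact hDint
  have hptwise : ∀ t ∈ Icc s R,
      D t ≤ h⁻¹ * (v (ℓ t))^2 + h * ‖gradient v (ℓ t)‖^2 := by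
    intro t ht
    set a := v (ℓ t)
    set dd := (fderiv ℝ v (ℓ t)) e
    set n := ‖gradient v (ℓ t)‖
    have hn0 : 0 ≤ n := norm_nonneg _
    have hdn : |dd| ≤ n := by
      show |dd| ≤ ‖gradient v (ℓ t)‖
      rw [aux_grad_norm]
      calc |dd| = ‖dd‖ := rfl
        _ ≤ ‖fderiv ℝ v (ℓ t)‖ * ‖e‖ := (fderiv ℝ v (ℓ t)).le_opNorm e
        _ = ‖fderiv ℝ v (ℓ t)‖ := by rw [he, mul_one]
    have hd2 : dd^2 ≤ n^2 := sq_le_sq' (abs_le.mp hdn).1 (abs_le.mp hdn).2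
    have key : 2 * a * dd ≤ h⁻¹ * a^2 + h * dd^2 := by
      have h1 : 0 ≤ (a - h * dd)^2 := sq_nonneg _
      have h2 : 2 * a * dd * h ≤ a^2 + h^2 * dd^2 := by nlinarith
      have h3 : h⁻¹ * (2 * a * dd * h) = 2 * a * dd := by field_simp
      calc 2 * a * dd = h⁻¹ * (2 * a * dd * h) := h3.symm
        _ ≤ h⁻¹ * (a^2 + h^2 * dd^2) := by
            apply mul_le_mul_of_nonneg_left h2 (le_of_lt (inv_pos.mpr hh))
        _ = h⁻¹ * a^2 + h * dd^2 := by field_simp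
    calc D t = 2 * a * dd := rfl
      _ ≤ h⁻¹ * a^2 + h * dd^2 := key
      _ ≤ h⁻¹ * a^2 + h * n^2 := by nlinarith
  have hmono := intervalIntegral.integral_mono_on hsR hDint hWint hptwise
  have : (v (ℓ R))^2 - (v (ℓ s))^2 ≤
      ∫ t in s..R, (h⁻¹ * (v (ℓ t))^2 + h * ‖gradient v (ℓ t)‖^2) := by
    rw [← hftc]; exact hmono
  linarith







/-- Transfer of a lintegral over a set covered by a Lipschitz curve. -/
theorem aux_hausdorff_transfer {K : NNReal} {γ : ℝ → X2} (hγ : LipschitzWith K γ)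
    {I : Set ℝ} (hI : MeasurableSet I) {F : Set X2} (hF : F ⊆ γ '' I)
    {f : X2 → ENNReal} (hf : Measurable f) :
    ∫⁻ x in F, f x ∂μH[1] ≤ (K : ENNReal) * ∫⁻ θ in I, f (γ θ) := by
  have hle : μH[1].restrict F ≤ (K : ENNReal) • Measure.map γ (volume.restrict I) := by
    rw [Measure.le_iff]
    intro s hs
    have h1 : μH[1].restrict F s ≤ μH[1] (γ '' (I ∩ γ ⁻¹' s)) := by
      rw [Measure.restrict_apply hs]
      apply measure_mono
      intro x ⟨hxs, hxF⟩
      obtain ⟨θ, hθI, rfl⟩ := hF hxF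
      exact ⟨θ, ⟨hθI, hxs⟩, rfl⟩
    have h2 : μH[1] (γ '' (I ∩ γ ⁻¹' s)) ≤ (K : ENNReal) ^ (1:ℝ) * μH[1] (I ∩ γ ⁻¹' s) :=
      hγ.hausdorffMeasure_image_le zero_le_one _
    rw [ENNReal.rpow_one, MeasureTheory.hausdorffMeasure_real] at h2
    calc μH[1].restrict F s ≤ (K : ENNReal) * volume (I ∩ γ ⁻¹' s) := le_trans h1 h2
      _ = ((K : ENNReal) • Measure.map γ (volume.restrict I)) s := by
          rw [Measure.smul_apply, Measure.map_apply hγ.continuous.measurable hs,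
            Measure.restrict_apply (hγ.continuous.measurable hs), inter_comm, smul_eq_mul]
  calc ∫⁻ x in F, f x ∂μH[1] ≤ ∫⁻ x, f x ∂((K : ENNReal) • Measure.map γ (volume.restrict I)) :=
        lintegral_mono' hle (le_refl f)
    _ = (K : ENNReal) * ∫⁻ x, f x ∂(Measure.map γ (volume.restrict I)) := lintegral_smul_measure _ _
    _ = (K : ENNReal) * ∫⁻ θ in I, f (γ θ) := by rw [lintegral_map hf hγ.continuous.measurable]

/-- polar-coordinates bound for radial iterated integrals. -/
theorem aux_polar_bound (Φ : X2 → ENNReal) (hΦ : Measurable Φ) (z : X2)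
    {a b : ℝ} (ha : 0 < a) :
    (∫⁻ θ in Icc (-π) π, ∫⁻ t in Icc a b, Φ (z + t • uvec θ)) ≤
      (ENNReal.ofReal a)⁻¹ * ∫⁻ x, Φ x := by
  have huc : Continuous uvec :=
    iota_continuous.comp (by continuity : Continuous fun θ : ℝ => (Real.cos θ, Real.sin θ))
  have hcont : Continuous (fun p : ℝ × ℝ => z + p.1 • uvec p.2) :=
    continuous_const.add (continuous_fst.smul (huc.comp continuous_snd))
  have hmeas : Measurable (fun p : ℝ × ℝ => Φ (z + p.1 • uvec p.2)) := hΦ.comp hcont.measurable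
  -- step 1 : insert the weight t and enlarge the t-domain
  have step1 : ∀ θ : ℝ, (∫⁻ t in Icc a b, Φ (z + t • uvec θ)) ≤
      (ENNReal.ofReal a)⁻¹ * ∫⁻ t in Ioi 0, ENNReal.ofReal t * Φ (z + t • uvec θ) := by
    intro θ
    have h1 : (∫⁻ t in Icc a b, Φ (z + t • uvec θ)) ≤
        ∫⁻ t in Icc a b, (ENNReal.ofReal a)⁻¹ * (ENNReal.ofReal t * Φ (z + t • uvec θ)) := by
      apply setLIntegral_mono' measurableSet_Icc
      intro t ht
      conv_lhs => rw [← one_mul (Φ (z + t • uvec θ))]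
      rw [← mul_assoc]
      apply mul_le_mul_left
      rw [← ENNReal.div_eq_inv_mul,
        ENNReal.le_div_iff_mul_le (Or.inl (by simp [ne_eq, ENNReal.ofReal_eq_zero]; linarith))
          (Or.inl ENNReal.ofReal_ne_top), one_mul]
      exact ENNReal.ofReal_le_ofReal ht.1
    rw [lintegral_const_mul _ (by
      exact (ENNReal.measurable_ofReal.comp measurable_id).mul
        (hΦ.comp ((continuous_const.add (continuous_id.smul continuous_const)).measurable)))] at h1
    refine le_trans h1 (mul_le_mul_right ?_ _)
    apply lintegral_mono_set
    intro t ht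
    exact lt_of_lt_of_le ha ht.1
  calc (∫⁻ θ in Icc (-π) π, ∫⁻ t in Icc a b, Φ (z + t • uvec θ))
      ≤ ∫⁻ θ in Icc (-π) π, (ENNReal.ofReal a)⁻¹ *
          ∫⁻ t in Ioi 0, ENNReal.ofReal t * Φ (z + t • uvec θ) :=
        lintegral_mono (fun θ => step1 θ)
    _ = (ENNReal.ofReal a)⁻¹ * ∫⁻ θ in Icc (-π) π,
          ∫⁻ t in Ioi 0, ENNReal.ofReal t * Φ (z + t • uvec θ) := by
        rw [lintegral_const_mul]
        apply Measurable.lintegral_prod_right (f := fun θ t => ENNReal.ofReal t * Φ (z + t • uvec θ))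
        exact ((ENNReal.measurable_ofReal.comp measurable_snd).mul
          (hΦ.comp ((continuous_const.add
            (continuous_snd.smul (huc.comp continuous_fst))).measurable)))
    _ ≤ (ENNReal.ofReal a)⁻¹ * ∫⁻ x, Φ x := by
        apply mul_le_mul_right
        -- iterated integral equals integral over the polar target
        have hIcc : (∫⁻ θ in Icc (-π) π, ∫⁻ t in Ioi 0, ENNReal.ofReal t * Φ (z + t • uvec θ))
            = ∫⁻ θ in Ioo (-π) π, ∫⁻ t in Ioi 0, ENNReal.ofReal t * Φ (z + t • uvec θ) :=
          (setLIntegral_congr Ioo_ae_eq_Icc).symm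
        rw [hIcc]
        set F : ℝ × ℝ → ENNReal := fun p => ENNReal.ofReal p.1 * Φ (z + p.1 • uvec p.2) with hF
        have hFm : Measurable F :=
          (ENNReal.measurable_ofReal.comp measurable_fst).mul hmeas
        have hswap : (∫⁻ θ in Ioo (-π) π, ∫⁻ t in Ioi 0, ENNReal.ofReal t * Φ (z + t • uvec θ))
            = ∫⁻ p in polarCoord.target, F p := by
          rw [polarCoord_target, Measure.volume_eq_prod, ← Measure.prod_restrict,
            lintegral_prod F hFm.aemeasurable]
          exact (lintegral_lintegral_swap hFm.aemeasurable).symm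
        rw [hswap]
        have hpolar : (∫⁻ p in polarCoord.target, F p) = ∫⁻ x, Φ x := by
          have h1 : (∫⁻ p in polarCoord.target,
              ENNReal.ofReal p.1 * Φ (z + iota (polarCoord.symm p))) =
              ∫⁻ q, Φ (z + iota q) := aux_lintegral_polar (fun q => Φ (z + iota q))
          have h2 : ∀ p : ℝ × ℝ, F p = ENNReal.ofReal p.1 * Φ (z + iota (polarCoord.symm p)) := by
            intro p
            rw [hF, polarCoord_symm_apply]
            simp only [iota_smul, uvec]
          calc (∫⁻ p in polarCoord.target, F p)
              = ∫⁻ p in polarCoord.target,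
                  ENNReal.ofReal p.1 * Φ (z + iota (polarCoord.symm p)) := by
                apply lintegral_congr h2
            _ = ∫⁻ q, Φ (z + iota q) := h1
            _ = ∫⁻ y, Φ (z + y) :=
                iota_measurePreserving.lintegral_comp (hΦ.comp (measurable_const_add z))
            _ = ∫⁻ x, Φ x := lintegral_add_left_eq_self _ z
        rw [hpolar]


/-- A bounded open set `E ⊂ ℝ²` with diameter `h_E` is shape-regular with parameter
`ρ`: it is star-shaped with respect to a closed ball of radius `ρ · h_E`. -/
def ShapeRegular (ρ : ℝ) (E : Set (EuclideanSpace ℝ (Fin 2))) : Prop :=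
  ∃ z : EuclideanSpace ℝ (Fin 2), closedBall z (ρ * Metric.diam E) ⊆ E ∧
    ∀ x ∈ E, ∀ y ∈ closedBall z (ρ * Metric.diam E), segment ℝ x y ⊆ E

set_option maxHeartbeats 1000000 in
/-- Lemma 3.3, first scaled trace inequality:
`‖v‖²_{0,∂E} ≲ h_E⁻¹ ‖v‖²_{0,E} + h_E |v|²_{1,E}` on shape-regular elements. -/
theorem scaled_trace_inequality_L2 (ρ : ℝ) (hρ : ρ ∈ Set.Ioo (0 : ℝ) 1) :
    ∃ C > (0 : ℝ), ∀ E : Set (EuclideanSpace ℝ (Fin 2)),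
      IsOpen E → Bornology.IsBounded E → ShapeRegular ρ E →
      ∀ v : EuclideanSpace ℝ (Fin 2) → ℝ,
      ∀ U : Set (EuclideanSpace ℝ (Fin 2)), IsOpen U → closure E ⊆ U →
        ContDiffOn ℝ 1 v U →
        (∫ x in frontier E, v x ^ 2 ∂μH[1]) ≤
          C * ((Metric.diam E)⁻¹ * (∫ x in E, v x ^ 2) +
               Metric.diam E * ∫ x in E, ‖gradient v x‖ ^ 2) := by
  obtain ⟨hρ0, hρ1⟩ := hρ
  refine ⟨12 / ρ^3, div_pos (by norm_num) (pow_pos hρ0 3), ?_⟩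
  intro E hEopen hEbdd hsh v U hUopen hclU hv
  obtain ⟨z, hball, hstar⟩ := hsh
  set h := Metric.diam E with hhdef
  have hh0 : 0 ≤ h := diam_nonneg
  have hz : z ∈ E := hball (mem_closedBall_self (by positivity))
  have hhpos : 0 < h := by
    obtain ⟨ε, hε, hballE⟩ := Metric.isOpen_iff.mp hEopen z hz
    have hmem : z + (ε/2) • uvec 0 ∈ E := by
      apply hballE
      rw [mem_ball, dist_eq_norm, add_sub_cancel_left, norm_smul, uvec_norm,
        Real.norm_eq_abs, abs_of_pos (by linarith), mul_one]
      linarith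
    have hd : dist (z + (ε/2) • uvec 0) z ≤ h := Metric.dist_le_diam_of_mem hEbdd hmem hz
    rw [dist_eq_norm, add_sub_cancel_left, norm_smul, uvec_norm, Real.norm_eq_abs,
      abs_of_pos (by linarith), mul_one] at hd
    linarith
  set r0 := ρ * h with hr0def
  have hr0 : 0 < r0 := mul_pos hρ0 hhpos
  have hr02 : 0 < r0 / 2 := by linarith
  have hr0h : r0 ≤ h := by nlinarith
  have hEc : closure E ⊆ closedBall z h :=
    closure_minimal (fun x hx => mem_closedBall.mpr (Metric.dist_le_diam_of_mem hEbdd hx hz))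
      Metric.isClosed_closedBall
  have hcone := aux_cone hball hstar hr0
  have hUsub : E ⊆ U := subset_closure.trans hclU
  have hvc : ContinuousOn (fun x => v x ^ 2) U := hv.continuousOn.pow 2
  have hgradeq : (fun x : X2 => ‖gradient v x‖ ^ 2) = fun x => ‖fderiv ℝ v x‖ ^ 2 :=
    funext fun x => by rw [aux_grad_norm]
  have hgc : ContinuousOn (fun x => ‖gradient v x‖ ^ 2) U := by
    rw [hgradeq]
    exact (hv.continuousOn_fderiv_of_isOpen hUopen le_rfl).norm.pow 2
  have hG2c : ContinuousOn (fun x => h⁻¹ * v x ^ 2 + h * ‖gradient v x‖ ^ 2) U :=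
    (continuousOn_const.mul hvc).add (continuousOn_const.mul hgc)
  -- integrability on E
  have hKcomp : IsCompact (closure E) := hEbdd.isCompact_closure
  have hIv : IntegrableOn (fun x => v x ^ 2) E volume :=
    ((hvc.mono hclU).integrableOn_compact hKcomp).mono_set subset_closure
  have hIg : IntegrableOn (fun x => ‖gradient v x‖ ^ 2) E volume :=
    ((hgc.mono hclU).integrableOn_compact hKcomp).mono_set subset_closure
  set IV := ∫ x in E, v x ^ 2 with hIVdef
  set IG := ∫ x in E, ‖gradient v x‖ ^ 2 with hIGdef
  have hIV0 : 0 ≤ IV := setIntegral_nonneg hEopen.measurableSet fun x _ => sq_nonneg _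
  have hIG0 : 0 ≤ IG := setIntegral_nonneg hEopen.measurableSet fun x _ => sq_nonneg _
  -- measurable ENNReal-valued integrands
  set Φ1 : X2 → ENNReal := fun x => ENNReal.ofReal (E.indicator (fun y => v y ^ 2) x) with hΦ1def
  have hΦ1m : Measurable Φ1 := ENNReal.measurable_ofReal.comp
    (aux_measurable_indicator hEopen.measurableSet (hvc.mono hUsub))
  set Φ2 : X2 → ENNReal := fun x => ENNReal.ofReal
    (E.indicator (fun y => h⁻¹ * v y ^ 2 + h * ‖gradient v y‖ ^ 2) x) with hΦ2def
  have hΦ2m : Measurable Φ2 := ENNReal.measurable_ofReal.comp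
    (aux_measurable_indicator hEopen.measurableSet (hG2c.mono hUsub))
  set Ψ : X2 → ENNReal := fun x =>
    ENNReal.ofReal ((closure E).indicator (fun y => v y ^ 2) x) with hΨdef
  have hΨm : Measurable Ψ := ENNReal.measurable_ofReal.comp
    (aux_measurable_indicator isClosed_closure.measurableSet (hvc.mono hclU))
  set γ : ℝ → X2 := fun θ => z + Rad E z h θ • uvec θ with hγdef
  have hγlip := aux_gamma_lip hr0 hr0h hball hcone hEc
  have hfr := aux_frontier_subset hr0 hr0h hball hcone hEc hEopen
  set m := ENNReal.ofReal (r0 / 2) with hmdef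
  have hm0 : m ≠ 0 := by
    rw [hmdef, ne_eq, ENNReal.ofReal_eq_zero, not_le]; exact hr02
  have hmtop : m ≠ ⊤ := ENNReal.ofReal_ne_top
  have huc : Continuous uvec := uvec_lipschitz.continuous
  -- the key pointwise-in-θ estimate
  have hkey : ∀ θ : ℝ, ENNReal.ofReal ((v (γ θ)) ^ 2) ≤
      m⁻¹ * (∫⁻ s in Icc (r0/2) r0, Φ1 (z + s • uvec θ)) +
      ∫⁻ t in Icc (r0/2) h, Φ2 (z + t • uvec θ) := by
    intro θ
    obtain ⟨⟨hR0, hRh⟩, hRcl, hr0R⟩ := Rad_mem hr0 hr0h hball hcone hEc θ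
    set T := ∫⁻ t in Icc (r0/2) h, Φ2 (z + t • uvec θ) with hTdef
    have hstep : ∀ s ∈ Icc (r0/2) r0,
        ENNReal.ofReal ((v (γ θ)) ^ 2) ≤ Φ1 (z + s • uvec θ) + T := by
      rintro s ⟨hs1, hs2⟩
      have hsR : s ≤ Rad E z h θ := le_trans hs2 hr0R
      have hs0 : 0 < s := lt_of_lt_of_le hr02 hs1
      have hseg : ∀ t ∈ Icc s (Rad E z h θ), z + t • uvec θ ∈ U := by
        rintro t ⟨hts, htR⟩
        rcases lt_or_eq_of_le htR with hlt | heq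
        · exact hUsub (Rad_lt_mem hr0 hr0h hball hcone hEc (le_trans hs0.le hts) hlt)
        · rw [heq]; exact hclU hRcl
      have hftc := aux_ftc hUopen hv (uvec_norm θ) hsR hhpos hseg
      have hγθ : γ θ = z + Rad E z h θ • uvec θ := rfl
      have hWc : ContinuousOn (fun t => h⁻¹ * (v (z + t • uvec θ)) ^ 2 +
          h * ‖gradient v (z + t • uvec θ)‖ ^ 2) (Icc s (Rad E z h θ)) := by
        exact hG2c.comp (Continuous.continuousOn (continuous_const.add
          (continuous_id.smul continuous_const))) hseg
      have hWint : IntegrableOn (fun t => h⁻¹ * (v (z + t • uvec θ)) ^ 2 +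
          h * ‖gradient v (z + t • uvec θ)‖ ^ 2) (Ioc s (Rad E z h θ)) volume :=
        hWc.integrableOn_Icc.mono_set Ioc_subset_Icc_self
      have hmem1 : z + s • uvec θ ∈ E := by
        apply hball
        rw [mem_closedBall, dist_eq_norm, add_sub_cancel_left, norm_smul, uvec_norm,
          Real.norm_eq_abs, abs_of_pos hs0, mul_one]
        exact hs2
      have hΦ1eq : Φ1 (z + s • uvec θ) = ENNReal.ofReal ((v (z + s • uvec θ)) ^ 2) := by
        rw [hΦ1def]; simp only [indicator_of_mem hmem1]
      have hintle : ENNReal.ofReal (∫ t in s..(Rad E z h θ),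
          (h⁻¹ * (v (z + t • uvec θ)) ^ 2 + h * ‖gradient v (z + t • uvec θ)‖ ^ 2)) ≤ T := by
        rw [intervalIntegral.integral_of_le hsR,
          ofReal_integral_eq_lintegral_ofReal hWint (Filter.Eventually.of_forall fun t =>
            add_nonneg (mul_nonneg (inv_nonneg.mpr hh0) (sq_nonneg _))
              (mul_nonneg hh0 (sq_nonneg _)))]
        have h_ne : ∀ᵐ (t : ℝ), t ≠ Rad E z h θ := by
          rw [ae_iff]
          simp only [ne_eq, not_not, Set.setOf_eq_eq_singleton]
          exact measure_singleton _
        have hae : ∀ᵐ t ∂(volume.restrict (Ioc s (Rad E z h θ))),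
            ENNReal.ofReal (h⁻¹ * (v (z + t • uvec θ)) ^ 2 +
              h * ‖gradient v (z + t • uvec θ)‖ ^ 2) ≤ Φ2 (z + t • uvec θ) := by
          filter_upwards [ae_restrict_mem measurableSet_Ioc, ae_restrict_of_ae h_ne]
            with t htmem htne
          have htR : t < Rad E z h θ := lt_of_le_of_ne htmem.2 htne
          have htE : z + t • uvec θ ∈ E :=
            Rad_lt_mem hr0 hr0h hball hcone hEc (le_trans hs0.le htmem.1.le) htR
          rw [hΦ2def]; simp only [indicator_of_mem htE]; exact le_refl _
        refine le_trans (lintegral_mono_ae hae) ?_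
        rw [hTdef]
        apply lintegral_mono_set
        exact fun t ht => ⟨le_trans hs1 ht.1.le, le_trans ht.2 hRh⟩
      calc ENNReal.ofReal ((v (γ θ)) ^ 2)
          ≤ ENNReal.ofReal ((v (z + s • uvec θ)) ^ 2 + ∫ t in s..(Rad E z h θ),
              (h⁻¹ * (v (z + t • uvec θ)) ^ 2 + h * ‖gradient v (z + t • uvec θ)‖ ^ 2)) := by
            rw [hγθ]; exact ENNReal.ofReal_le_ofReal hftc
        _ ≤ ENNReal.ofReal ((v (z + s • uvec θ)) ^ 2) + ENNReal.ofReal (∫ t in s..(Rad E z h θ),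
              (h⁻¹ * (v (z + t • uvec θ)) ^ 2 + h * ‖gradient v (z + t • uvec θ)‖ ^ 2)) :=
            ENNReal.ofReal_add_le
        _ ≤ Φ1 (z + s • uvec θ) + T := add_le_add (le_of_eq hΦ1eq.symm) hintle
    -- integrate the estimate in s over Icc (r0/2) r0
    have hΦ1sm : Measurable (fun s : ℝ => Φ1 (z + s • uvec θ)) :=
      hΦ1m.comp ((continuous_const.add (continuous_id.smul continuous_const)).measurable)
    have hconst : (∫⁻ _ in Icc (r0/2) r0, ENNReal.ofReal ((v (γ θ)) ^ 2)) =
        ENNReal.ofReal ((v (γ θ)) ^ 2) * m := by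
      rw [setLIntegral_const, hmdef, Real.volume_Icc, show r0 - r0/2 = r0/2 by ring]
    have hup : (∫⁻ s in Icc (r0/2) r0, (Φ1 (z + s • uvec θ) + T)) =
        (∫⁻ s in Icc (r0/2) r0, Φ1 (z + s • uvec θ)) + m * T := by
      rw [lintegral_add_right _ measurable_const, setLIntegral_const, hmdef, Real.volume_Icc,
        show r0 - r0/2 = r0/2 by ring, mul_comm]
    have hint : ENNReal.ofReal ((v (γ θ)) ^ 2) * m ≤
        (∫⁻ s in Icc (r0/2) r0, Φ1 (z + s • uvec θ)) + m * T := by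
      rw [← hconst, ← hup]
      exact setLIntegral_mono' measurableSet_Icc hstep
    have hmul := mul_le_mul_right hint m⁻¹
    rw [mul_comm (ENNReal.ofReal ((v (γ θ)) ^ 2)) m, ← mul_assoc,
      ENNReal.inv_mul_cancel hm0 hmtop, one_mul, mul_add, ← mul_assoc,
      ENNReal.inv_mul_cancel hm0 hmtop, one_mul] at hmul
    exact hmul
  -- integrate over θ
  have hmeas_inner1 : Measurable (fun θ : ℝ => ∫⁻ s in Icc (r0/2) r0, Φ1 (z + s • uvec θ)) := by
    apply Measurable.lintegral_prod_right (f := fun θ s => Φ1 (z + s • uvec θ))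
    exact hΦ1m.comp ((continuous_const.add
      (continuous_snd.smul (huc.comp continuous_fst))).measurable)
  have hθint : (∫⁻ θ in Icc (-π) π, ENNReal.ofReal ((v (γ θ)) ^ 2)) ≤
      m⁻¹ * (∫⁻ θ in Icc (-π) π, ∫⁻ s in Icc (r0/2) r0, Φ1 (z + s • uvec θ)) +
      (∫⁻ θ in Icc (-π) π, ∫⁻ t in Icc (r0/2) h, Φ2 (z + t • uvec θ)) := by
    refine le_trans (lintegral_mono hkey) (le_of_eq ?_)
    rw [lintegral_add_left (hmeas_inner1.const_mul _), lintegral_const_mul _ hmeas_inner1]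
  -- polar bounds
  have hA1 : (∫⁻ θ in Icc (-π) π, ∫⁻ s in Icc (r0/2) r0, Φ1 (z + s • uvec θ)) ≤
      m⁻¹ * ∫⁻ x, Φ1 x := by
    refine le_trans (lintegral_mono fun θ => lintegral_mono_set (Icc_subset_Icc le_rfl hr0h)) ?_
    exact aux_polar_bound Φ1 hΦ1m z hr02
  have hA2 : (∫⁻ θ in Icc (-π) π, ∫⁻ t in Icc (r0/2) h, Φ2 (z + t • uvec θ)) ≤
      m⁻¹ * ∫⁻ x, Φ2 x := aux_polar_bound Φ2 hΦ2m z hr02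
  -- identify ∫⁻ Φ with Bochner integrals
  have hL1 : (∫⁻ x, Φ1 x) = ENNReal.ofReal IV := by
    have heq : ∀ x, Φ1 x = E.indicator (fun y => ENNReal.ofReal (v y ^ 2)) x := by
      intro x
      rw [hΦ1def]
      by_cases hx : x ∈ E
      · simp only [indicator_of_mem hx]
      · simp only [indicator_of_notMem hx, ENNReal.ofReal_zero]
    rw [lintegral_congr heq, lintegral_indicator hEopen.measurableSet _, hIVdef]
    exact (ofReal_integral_eq_lintegral_ofReal hIv
      (Filter.Eventually.of_forall fun x => sq_nonneg _)).symm
  have hIG2 : IntegrableOn (fun y => h⁻¹ * v y ^ 2 + h * ‖gradient v y‖ ^ 2) E volume :=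
    (hIv.const_mul h⁻¹).add (hIg.const_mul h)
  have hL2 : (∫⁻ x, Φ2 x) = ENNReal.ofReal (h⁻¹ * IV + h * IG) := by
    have heq : ∀ x, Φ2 x = E.indicator
        (fun y => ENNReal.ofReal (h⁻¹ * v y ^ 2 + h * ‖gradient v y‖ ^ 2)) x := by
      intro x
      rw [hΦ2def]
      by_cases hx : x ∈ E
      · simp only [indicator_of_mem hx]
      · simp only [indicator_of_notMem hx, ENNReal.ofReal_zero]
    rw [lintegral_congr heq, lintegral_indicator hEopen.measurableSet _]
    rw [← ofReal_integral_eq_lintegral_ofReal hIG2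
      (Filter.Eventually.of_forall fun x => add_nonneg (mul_nonneg (inv_nonneg.mpr hh0) (sq_nonneg _))
        (mul_nonneg hh0 (sq_nonneg _)))]
    congr 1
    rw [integral_add (hIv.const_mul h⁻¹) (hIg.const_mul h), integral_const_mul,
      integral_const_mul, hIVdef, hIGdef]
  -- Hausdorff transfer
  have hΨγ : ∀ θ : ℝ, Ψ (γ θ) = ENNReal.ofReal ((v (γ θ)) ^ 2) := by
    intro θ
    rw [hΨdef]
    exact congrArg ENNReal.ofReal (indicator_of_mem (Rad_mem hr0 hr0h hball hcone hEc θ).2.1 _)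
  have htransfer : (∫⁻ x in frontier E, Ψ x ∂μH[1]) ≤
      (Real.toNNReal (h^2/r0 + h) : ENNReal) *
        ∫⁻ θ in Icc (-π) π, ENNReal.ofReal ((v (γ θ)) ^ 2) := by
    refine le_trans (aux_hausdorff_transfer hγlip measurableSet_Icc hfr hΨm) (le_of_eq ?_)
    congr 1
    exact lintegral_congr fun θ => hΨγ θ
  -- assembling the ENNReal bound
  have hq0 : 0 ≤ h^2/r0 + h := by positivity
  have hKofReal : (Real.toNNReal (h^2/r0 + h) : ENNReal) = ENNReal.ofReal (h^2/r0 + h) := rfl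
  have hminv : m⁻¹ = ENNReal.ofReal (2/r0) := by
    rw [hmdef, ← ENNReal.ofReal_inv_of_pos hr02]
    congr 1
    rw [inv_div]
  have hfinal : (∫⁻ x in frontier E, ENNReal.ofReal (v x ^ 2) ∂μH[1]) ≤
      ENNReal.ofReal (12 / ρ^3 * (h⁻¹ * IV + h * IG)) := by
    have hcongr : (∫⁻ x in frontier E, ENNReal.ofReal (v x ^ 2) ∂μH[1]) =
        ∫⁻ x in frontier E, Ψ x ∂μH[1] := by
      refine setLIntegral_congr_fun isClosed_frontier.measurableSet
        (fun x hx => ?_)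
      rw [hΨdef]
      simp only [indicator_of_mem (frontier_subset_closure hx)]
    rw [hcongr]
    have hchain : (∫⁻ x in frontier E, Ψ x ∂μH[1]) ≤
        ENNReal.ofReal (h^2/r0 + h) *
          (m⁻¹ * (m⁻¹ * ENNReal.ofReal IV) + m⁻¹ * ENNReal.ofReal (h⁻¹ * IV + h * IG)) := by
      refine le_trans htransfer ?_
      rw [hKofReal]
      apply mul_le_mul_right
      refine le_trans hθint ?_
      apply add_le_add
      · exact mul_le_mul_right (le_trans hA1 (le_of_eq (by rw [hL1]))) _
      · exact le_trans hA2 (le_of_eq (by rw [hL2]))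
    refine le_trans hchain ?_
    rw [hminv]
    rw [← ENNReal.ofReal_mul (by positivity), ← ENNReal.ofReal_mul (by positivity),
      ← ENNReal.ofReal_mul (by positivity),
      ← ENNReal.ofReal_add (by positivity) (mul_nonneg (by positivity)
        (add_nonneg (mul_nonneg (by positivity) hIV0) (mul_nonneg hh0 hIG0))),
      ← ENNReal.ofReal_mul hq0]
    apply ENNReal.ofReal_le_ofReal
    -- the purely real arithmetic
    set X := h⁻¹ * IV with hXdef
    set Y := h * IG with hYdef
    have hX0 : 0 ≤ X := mul_nonneg (by positivity) hIV0
    have hY0 : 0 ≤ Y := mul_nonneg hh0 hIG0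
    have heq1 : (h^2/r0 + h) * (2/r0 * (2/r0 * IV) + 2/r0 * (X + Y)) =
        (1 + ρ)/ρ * (4/ρ^2 * X + 2/ρ * (X + Y)) := by
      rw [hr0def, hXdef, hYdef]
      field_simp
      ring
    rw [heq1]
    have h5 : (1 + ρ)/ρ ≤ 2/ρ := by gcongr; linarith
    have h6 : 0 ≤ 4/ρ^2 * X + 2/ρ * (X + Y) := by positivity
    calc (1 + ρ)/ρ * (4/ρ^2 * X + 2/ρ * (X + Y))
        ≤ 2/ρ * (4/ρ^2 * X + 2/ρ * (X + Y)) := mul_le_mul_of_nonneg_right h5 h6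
      _ = 8/ρ^3 * X + 4/ρ^2 * (X + Y) := by field_simp; ring
      _ ≤ 8/ρ^3 * (X + Y) + 4/ρ^3 * (X + Y) := by
          apply add_le_add
          · apply mul_le_mul_of_nonneg_left (by linarith) (by positivity)
          · have h7 : 4/ρ^2 ≤ 4/ρ^3 := div_le_div_of_nonneg_left (by norm_num)
              (by positivity) (pow_le_pow_of_le_one hρ0.le hρ1.le (by norm_num))
            exact mul_le_mul_of_nonneg_right h7 (by linarith)
      _ = 12/ρ^3 * (X + Y) := by ring
  -- conclude with the Bochner integral on the left
  by_cases hint : Integrable (fun x => v x ^ 2) (μH[1].restrict (frontier E))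
  · rw [integral_eq_lintegral_of_nonneg_ae (Filter.Eventually.of_forall fun x => sq_nonneg (v x))
      hint.aestronglyMeasurable]
    have hrhs0 : 0 ≤ 12 / ρ^3 * (h⁻¹ * IV + h * IG) := by
      apply mul_nonneg (by positivity)
      exact add_nonneg (mul_nonneg (by positivity) hIV0) (mul_nonneg hh0 hIG0)
    calc (∫⁻ x in frontier E, ENNReal.ofReal (v x ^ 2) ∂μH[1]).toReal
        ≤ (ENNReal.ofReal (12 / ρ^3 * (h⁻¹ * IV + h * IG))).toReal :=
          ENNReal.toReal_mono ENNReal.ofReal_ne_top hfinal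
      _ = 12 / ρ^3 * (h⁻¹ * IV + h * IG) := ENNReal.toReal_ofReal hrhs0
  · rw [integral_undef hint]
    apply mul_nonneg (by positivity)
    exact add_nonneg (mul_nonneg (by positivity) hIV0) (mul_nonneg hh0 hIG0)

end
end

section
/- Fix an integer t ≥ 0 and ρ ∈ (0,1). There exist constants c, C > 0, depending only on t and ρ, with the following property: for every h > 0, every point x_E ∈ ℝ², every open set E ⊂ ℝ² such that E ⊆ B̄(x_E, h) (the closed ball of radius h about x_E) and B(z, ρh) ⊆ E for some point z, and every family of real coefficients (g_α) indexed by multi-indices α = (α₁,α₂) ∈ ℕ² with α₁+α₂ ≤ t, the polynomial function g(x) = Σ_{|α|≤t} g_α · ((x − x_E)/h)^α (powers taken componentwise) satisfies c · h² · Σ_{|α|≤t} g_α² ≤ ∫_E g(x)² dx ≤ C · h² · Σ_{|α|≤t} g_α². -/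
open MeasureTheory Metric Set

noncomputable section

namespace SMAux

abbrev Plane := EuclideanSpace ℝ (Fin 2)

def idx (t : ℕ) : Finset (ℕ × ℕ) :=
  (Finset.range (t+1) ×ˢ Finset.range (t+1)).filter (fun p => p.1 + p.2 ≤ t)

def q (t : ℕ) (g : ℕ × ℕ → ℝ) (u : Plane) : ℝ :=
  ∑ α ∈ idx t, g α * (u 0) ^ α.1 * (u 1) ^ α.2

lemma mem_idx_zero (t : ℕ) : ((0,0) : ℕ × ℕ) ∈ idx t := by
  simp [idx]

lemma mem_idx_le {t : ℕ} {α : ℕ × ℕ} (hα : α ∈ idx t) : α.1 ≤ t ∧ α.2 ≤ t := by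
  simp only [idx, Finset.mem_filter, Finset.mem_product, Finset.mem_range] at hα
  omega

lemma abs_coord_le_norm (v : Plane) (i : Fin 2) : |v i| ≤ ‖v‖ := by
  rw [EuclideanSpace.norm_eq, ← Real.sqrt_sq_eq_abs]
  apply Real.sqrt_le_sqrt
  have := Finset.single_le_sum (f := fun j => ‖v j‖ ^ 2)
    (fun j _ => by positivity) (Finset.mem_univ i)
  simpa [sq_abs] using this

lemma one_var_poly_zero {p : Polynomial ℝ} {a b : ℝ} (hab : a < b)
    (h : ∀ x ∈ Ioo a b, p.eval x = 0) : p = 0 := by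
  apply p.eq_zero_of_infinite_isRoot
  apply Set.Infinite.mono (s := Ioo a b)
  · exact fun x hx => h x hx
  · exact Set.Ioo_infinite hab

lemma coeff_sum_C_mul_X_pow {s : Finset (ℕ × ℕ)} (c : ℕ × ℕ → ℝ) (n : ℕ × ℕ → ℕ) (k : ℕ) :
    (∑ α ∈ s, Polynomial.C (c α) * Polynomial.X ^ (n α)).coeff k
      = ∑ α ∈ s, if n α = k then c α else 0 := by
  rw [Polynomial.finset_sum_coeff]
  refine Finset.sum_congr rfl fun α _ => ?_
  rw [Polynomial.coeff_C_mul, Polynomial.coeff_X_pow]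
  split
  · split
    · ring
    · omega
  · split
    · omega
    · ring

lemma vanish_box {t : ℕ} {g : ℕ × ℕ → ℝ} {w0 w1 δ : ℝ} (hδ : 0 < δ)
    (h : ∀ x ∈ Ioo (w0 - δ) (w0 + δ), ∀ y ∈ Ioo (w1 - δ) (w1 + δ),
      ∑ α ∈ idx t, g α * x ^ α.1 * y ^ α.2 = 0) :
    ∀ α ∈ idx t, g α = 0 := by
  have hlt0 : w0 - δ < w0 + δ := by linarith
  have hlt1 : w1 - δ < w1 + δ := by linarith
  have hA : ∀ x ∈ Ioo (w0 - δ) (w0 + δ),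
      (∑ α ∈ idx t, Polynomial.C (g α * x ^ α.1) * Polynomial.X ^ α.2) = 0 := by
    intro x hx
    apply one_var_poly_zero hlt1
    intro y hy
    have := h x hx y hy
    simpa [Polynomial.eval_finset_sum] using this
  have hB : ∀ b : ℕ,
      (∑ α ∈ (idx t).filter (fun α => α.2 = b), Polynomial.C (g α) * Polynomial.X ^ α.1) = 0 := by
    intro b
    apply one_var_poly_zero hlt0
    intro x hx
    have h0 := hA x hx
    have h1 : (∑ α ∈ idx t, Polynomial.C (g α * x ^ α.1) * Polynomial.X ^ α.2).coeff b = 0 := by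
      rw [h0]; simp
    rw [coeff_sum_C_mul_X_pow] at h1
    rw [Polynomial.eval_finset_sum]
    rw [← h1, Finset.sum_filter]
    refine Finset.sum_congr rfl fun α _ => ?_
    split <;> simp
  rintro ⟨a, b⟩ hα
  have h2 := hB b
  have h3 : (∑ β ∈ (idx t).filter (fun β : ℕ × ℕ => β.2 = b),
      Polynomial.C (g β) * Polynomial.X ^ β.1).coeff a = 0 := by rw [h2]; simp
  rw [coeff_sum_C_mul_X_pow] at h3
  rw [Finset.sum_eq_single_of_mem (⟨a, b⟩ : ℕ × ℕ)] at h3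
  · simpa using h3
  · simp [Finset.mem_filter, hα]
  · rintro ⟨a', b'⟩ hβ hne
    simp only [Finset.mem_filter] at hβ
    have : b' = b := hβ.2
    subst this
    have : a' ≠ a := fun h => hne (by simp [h])
    simp [this]

lemma vanish_ball {t : ℕ} {g : ℕ × ℕ → ℝ} {w : Plane} {r : ℝ} (hr : 0 < r)
    (h : ∀ u ∈ ball w r, q t g u = 0) : ∀ α ∈ idx t, g α = 0 := by
  apply vanish_box (w0 := w 0) (w1 := w 1) (δ := r/2) (by linarith)
  intro x hx y hy
  obtain ⟨u, hu, hu0, hu1⟩ : ∃ u : Plane, u ∈ ball w r ∧ u 0 = x ∧ u 1 = y := by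
    refine ⟨(EuclideanSpace.equiv (Fin 2) ℝ).symm ![x, y], ?_, ?_, ?_⟩
    · rw [mem_ball, EuclideanSpace.dist_eq, Real.sqrt_lt' hr]
      rw [Fin.sum_univ_two]
      have e0 : ((EuclideanSpace.equiv (Fin 2) ℝ).symm ![x, y]) 0 = x := rfl
      have e1 : ((EuclideanSpace.equiv (Fin 2) ℝ).symm ![x, y]) 1 = y := rfl
      rw [e0, e1, Real.dist_eq, Real.dist_eq, sq_abs, sq_abs]
      obtain ⟨h1, h2⟩ := hx; obtain ⟨h3, h4⟩ := hy
      nlinarith [sq_nonneg (x - w 0), sq_nonneg (y - w 1)]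
    · rfl
    · rfl
  have := h u hu
  rw [q, hu0, hu1] at this
  exact this

lemma continuous_q (t : ℕ) (g : ℕ × ℕ → ℝ) : Continuous (q t g) := by
  unfold q
  exact continuous_finset_sum _ fun α _ => by
    exact ((continuous_const.mul ((PiLp.continuous_apply (p := 2) (β := fun _ : Fin 2 => ℝ) (0 : Fin 2)).pow _)).mul
      ((PiLp.continuous_apply (p := 2) (β := fun _ : Fin 2 => ℝ) (1 : Fin 2)).pow _))

lemma continuous_q_param (t : ℕ) (a : Plane) :
    Continuous (fun p : Plane × (ℕ × ℕ → ℝ) => q t p.2 (a + p.1)) := by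
  unfold q
  apply continuous_finset_sum _ fun α _ => ?_
  have h2 : Continuous fun p : Plane × (ℕ × ℕ → ℝ) => p.2 α :=
    (continuous_apply α).comp continuous_snd
  have hc : ∀ i : Fin 2, Continuous fun p : Plane × (ℕ × ℕ → ℝ) => (a + p.1) i := by
    intro i
    exact (PiLp.continuous_apply (p := 2) (β := fun _ : Fin 2 => ℝ) i).comp (continuous_const.add continuous_fst)
  exact (h2.mul ((hc 0).pow _)).mul ((hc 1).pow _)

lemma integral_ball_translate (f : Plane → ℝ) (w : Plane) (r : ℝ) :
    ∫ u in ball w r, f u = ∫ v in ball (0 : Plane) r, f (v + w) := by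
  rw [← integral_indicator measurableSet_ball, ← integral_indicator measurableSet_ball]
  rw [← integral_add_right_eq_self (fun x => (ball w r).indicator f x) w]
  congr 1
  ext v
  by_cases hv : v ∈ ball (0 : Plane) r
  · have hvw : v + w ∈ ball w r := by
      simpa [mem_ball, dist_eq_norm] using hv
    simp [indicator_of_mem hv, indicator_of_mem hvw]
  · have hvw : v + w ∉ ball w r := by
      simp only [mem_ball, dist_eq_norm] at hv ⊢
      simpa using hv
    simp [indicator_of_notMem hv, indicator_of_notMem hvw]

lemma finrank_plane : Module.finrank ℝ Plane = 2 := by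
  simp [finrank_euclideanSpace]

lemma integral_scale (f : Plane → ℝ) {h : ℝ} (hh : 0 < h) (xE : Plane) (E : Set Plane)
    (hE : MeasurableSet E) :
    ∫ x in E, f ((1/h) • (x - xE)) = h ^ 2 * ∫ u in (fun u : Plane => xE + h • u) ⁻¹' E, f u := by
  have hne : h ≠ 0 := ne_of_gt hh
  rw [← integral_indicator hE]
  have step1 : ∫ x, E.indicator (fun x => f ((1/h) • (x - xE))) x
      = ∫ y, E.indicator (fun x => f ((1/h) • (x - xE))) (y + xE) :=
    (integral_add_right_eq_self _ xE).symm
  rw [step1]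
  have step2 : (fun y : Plane => E.indicator (fun x => f ((1/h) • (x - xE))) (y + xE))
      = fun y : Plane => ((fun y : Plane => y + xE) ⁻¹' E).indicator (fun y => f ((1/h) • y)) y := by
    ext y
    by_cases hy : y + xE ∈ E
    · simp [indicator_of_mem, hy, mem_preimage]
    · simp [indicator_of_notMem, hy, mem_preimage]
  rw [step2]
  have step3 := MeasureTheory.Measure.integral_comp_smul (volume)
    (f := fun y : Plane => ((fun y : Plane => y + xE) ⁻¹' E).indicator (fun y => f ((1/h) • y)) y) h
  rw [finrank_plane] at step3
  rw [← inv_pow, abs_of_nonneg (by positivity), smul_eq_mul] at step3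
  have step4 : ∫ y, ((fun y : Plane => y + xE) ⁻¹' E).indicator (fun y => f ((1/h) • y)) y
      = h ^ 2 * ∫ u, ((fun y : Plane => y + xE) ⁻¹' E).indicator (fun y => f ((1/h) • y)) (h • u) := by
    rw [step3]
    field_simp
  rw [step4]
  congr 1
  rw [← integral_indicator]
  · congr 1
    ext u
    have huv : h⁻¹ • (h • u) = u := by
      rw [smul_smul]; field_simp; exact one_smul _ _
    by_cases hu : xE + h • u ∈ E
    · have : h • u + xE ∈ E := by rwa [add_comm]
      simp [indicator_of_mem, hu, this, mem_preimage, huv]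
    · have : ¬ (h • u + xE ∈ E) := by rwa [add_comm]
      simp [indicator_of_notMem, hu, this, mem_preimage, huv]
  · exact hE.preimage (by fun_prop)

/-- The key functional: integral over the ball of radius ρ centered at 0 of the squared
polynomial with coefficients `p.2`, translated by `p.1`. -/
def Phi (t : ℕ) (ρ : ℝ) : Plane × (ℕ × ℕ → ℝ) → ℝ :=
  fun p => ∫ v in ball (0 : Plane) ρ, (q t p.2 (v + p.1)) ^ 2

def K (t : ℕ) : Set (Plane × (ℕ × ℕ → ℝ)) :=
  closedBall (0 : Plane) 1 ×ˢ
    {g | (∑ α ∈ idx t, g α ^ 2) = 1 ∧ ∀ α ∉ idx t, g α = 0}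

lemma isCompact_K (t : ℕ) : IsCompact (K t) := by
  apply IsCompact.prod (isCompact_closedBall _ _)
  have hsub : {g : ℕ × ℕ → ℝ | (∑ α ∈ idx t, g α ^ 2) = 1 ∧ ∀ α ∉ idx t, g α = 0}
      ⊆ Set.pi univ (fun α => if α ∈ idx t then Icc (-1 : ℝ) 1 else {0}) := by
    rintro g ⟨hg1, hg2⟩ α _
    by_cases hα : α ∈ idx t
    · simp only [hα, if_true, mem_Icc]
      have h1 : g α ^ 2 ≤ 1 := by
        rw [← hg1]
        exact Finset.single_le_sum (f := fun β => g β ^ 2) (fun β _ => sq_nonneg _) hα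
      constructor <;> nlinarith
    · simp [hα, hg2 α hα]
  apply IsCompact.of_isClosed_subset ?_ ?_ hsub
  · exact isCompact_univ_pi fun α => by
      split
      · exact isCompact_Icc
      · exact isCompact_singleton
  · apply IsClosed.inter
    · exact isClosed_eq (continuous_finset_sum _ fun α _ => (continuous_apply α).pow 2)
        continuous_const
    · show IsClosed {g : ℕ × ℕ → ℝ | ∀ α ∉ idx t, g α = 0}
      have : {g : ℕ × ℕ → ℝ | ∀ α ∉ idx t, g α = 0}
          = ⋂ (α : ℕ × ℕ) (_ : α ∉ idx t), {g : ℕ × ℕ → ℝ | g α = 0} := by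
        ext g; simp
      rw [this]
      exact isClosed_iInter fun α => isClosed_iInter fun _ =>
        isClosed_eq (continuous_apply α) continuous_const

lemma K_nonempty (t : ℕ) : (K t).Nonempty := by
  refine ⟨(0, fun α => if α = (0,0) then 1 else 0), ?_, ?_, ?_⟩
  · exact mem_closedBall_self zero_le_one
  · rw [Finset.sum_eq_single_of_mem ((0,0) : ℕ × ℕ) (mem_idx_zero t)]
    · simp
    · intro β _ hβ
      simp [hβ]
  · intro α hα
    have h0 : α ≠ 0 := by
      intro hh
      subst hh
      exact hα (mem_idx_zero t)
    simp [h0]; exact h0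

lemma q_sq_integrableOn_ball (t : ℕ) (g : ℕ × ℕ → ℝ) (w : Plane) (r : ℝ) :
    IntegrableOn (fun v : Plane => (q t g (v + w)) ^ 2) (ball (0 : Plane) r) := by
  apply IntegrableOn.mono_set (t := closedBall (0 : Plane) r) ?_ ball_subset_closedBall
  apply ContinuousOn.integrableOn_compact (isCompact_closedBall _ _)
  exact (((continuous_q t g).comp (continuous_id.add continuous_const)).pow 2).continuousOn

lemma continuous_Phi (t : ℕ) {ρ : ℝ} (hρ : 0 < ρ) : Continuous (Phi t ρ) := by
  rw [continuous_iff_continuousAt]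
  intro p₀
  set M : ℝ := ρ + ‖p₀.1‖ + 2 with hMdef
  have hM1 : (1:ℝ) ≤ M := by
    have : (0:ℝ) ≤ ‖p₀.1‖ := norm_nonneg _
    simp only [hMdef]; linarith
  set B : ℝ := 1 + ∑ α ∈ idx t, |p₀.2 α| with hBdef
  have hB0 : 0 ≤ B := by
    have : 0 ≤ ∑ α ∈ idx t, |p₀.2 α| := Finset.sum_nonneg fun α _ => abs_nonneg _
    simp only [hBdef]; linarith
  set D : ℝ := (idx t).card * (B * M ^ (2*t)) with hDdef
  have hD0 : 0 ≤ D := by positivity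
  have hU : (closedBall p₀.1 1 ×ˢ Set.pi (↑(idx t) : Set (ℕ × ℕ))
      (fun α => closedBall (p₀.2 α) 1)) ∈ nhds p₀ := by
    apply prod_mem_nhds
    · exact closedBall_mem_nhds _ zero_lt_one
    · exact set_pi_mem_nhds (Finset.finite_toSet _)
        (fun α _ => closedBall_mem_nhds _ zero_lt_one)
  apply continuousAt_of_dominated (bound := fun _ => D ^ 2)
  · apply Filter.Eventually.of_forall
    intro p
    exact ((((continuous_q t p.2).comp (continuous_id.add continuous_const)).pow
      2)).aestronglyMeasurable
  · filter_upwards [hU] with p hp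
    obtain ⟨hpa, hpb⟩ := hp
    apply (ae_restrict_mem measurableSet_ball).mono
    intro a ha
    simp only [Real.norm_eq_abs]
    have hqD : |q t p.2 (a + p.1)| ≤ D := by
      rw [q]
      calc |∑ α ∈ idx t, p.2 α * ((a + p.1) 0) ^ α.1 * ((a + p.1) 1) ^ α.2|
          ≤ ∑ α ∈ idx t, |p.2 α * ((a + p.1) 0) ^ α.1 * ((a + p.1) 1) ^ α.2| :=
            Finset.abs_sum_le_sum_abs _ _
        _ ≤ ∑ α ∈ idx t, B * M ^ (2*t) := by
            apply Finset.sum_le_sum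
            intro α hα
            rw [abs_mul, abs_mul, abs_pow, abs_pow]
            have hcoord : ∀ i : Fin 2, |(a + p.1) i| ≤ M := by
              intro i
              have h1 : |(a + p.1) i| ≤ ‖a + p.1‖ := abs_coord_le_norm _ i
              have h2 : ‖a + p.1‖ ≤ ‖a‖ + ‖p.1‖ := norm_add_le _ _
              have h3 : ‖a‖ ≤ ρ := le_of_lt (by simpa [mem_ball, dist_eq_norm] using ha)
              have h4 : ‖p.1‖ ≤ ‖p₀.1‖ + 1 := by
                have hd : dist p.1 p₀.1 ≤ 1 := by
                  simpa [mem_closedBall] using hpa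
                calc ‖p.1‖ = ‖(p.1 - p₀.1) + p₀.1‖ := by rw [sub_add_cancel]
                  _ ≤ ‖p.1 - p₀.1‖ + ‖p₀.1‖ := norm_add_le _ _
                  _ ≤ 1 + ‖p₀.1‖ := by
                      rw [← dist_eq_norm]; linarith
                  _ = ‖p₀.1‖ + 1 := by ring
              simp only [hMdef]; linarith
            have hg : |p.2 α| ≤ B := by
              have hd : dist (p.2 α) (p₀.2 α) ≤ 1 := by
                have := hpb α (by exact_mod_cast hα)
                simpa [mem_closedBall] using this
              have h5 : |p₀.2 α| ≤ ∑ β ∈ idx t, |p₀.2 β| :=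
                Finset.single_le_sum (f := fun β => |p₀.2 β|) (fun β _ => abs_nonneg _) hα
              calc |p.2 α| = |(p.2 α - p₀.2 α) + p₀.2 α| := by rw [sub_add_cancel]
                _ ≤ |p.2 α - p₀.2 α| + |p₀.2 α| := abs_add_le _ _
                _ ≤ 1 + ∑ β ∈ idx t, |p₀.2 β| := by
                    rw [← Real.dist_eq]; linarith
                _ = B := hBdef.symm
            have hp1 : |(a + p.1) 0| ^ α.1 ≤ M ^ t := by
              calc |(a + p.1) 0| ^ α.1 ≤ M ^ α.1 :=
                    pow_le_pow_left₀ (abs_nonneg _) (hcoord 0) _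
                _ ≤ M ^ t := pow_le_pow_right₀ hM1 (mem_idx_le hα).1
            have hp2 : |(a + p.1) 1| ^ α.2 ≤ M ^ t := by
              calc |(a + p.1) 1| ^ α.2 ≤ M ^ α.2 :=
                    pow_le_pow_left₀ (abs_nonneg _) (hcoord 1) _
                _ ≤ M ^ t := pow_le_pow_right₀ hM1 (mem_idx_le hα).2
            have hMt0 : (0:ℝ) ≤ M ^ t := by positivity
            have h2t : M ^ (2*t) = M ^ t * M ^ t := by
              rw [two_mul, pow_add]
            rw [h2t]
            have hx0 : (0:ℝ) ≤ |(a + p.1) 0| ^ α.1 := by positivity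
            have hx1 : (0:ℝ) ≤ |(a + p.1) 1| ^ α.2 := by positivity
            calc |p.2 α| * |(a + p.1) 0| ^ α.1 * |(a + p.1) 1| ^ α.2
                ≤ B * (M ^ t) * (M ^ t) := by
                  apply mul_le_mul
                  · exact mul_le_mul hg hp1 hx0 hB0
                  · exact hp2
                  · exact hx1
                  · positivity
              _ = B * (M ^ t * M ^ t) := by ring
        _ = (idx t).card * (B * M ^ (2*t)) := by
            rw [Finset.sum_const, nsmul_eq_mul]
        _ = D := hDdef.symm
    calc |q t p.2 (a + p.1) ^ 2| = |q t p.2 (a + p.1)| ^ 2 := abs_pow _ _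
      _ ≤ D ^ 2 := by nlinarith [abs_nonneg (q t p.2 (a + p.1))]
  · exact integrableOn_const measure_ball_lt_top.ne
  · apply Filter.Eventually.of_forall
    intro a
    exact ((continuous_q_param t a).pow 2).continuousAt

lemma Phi_pos (t : ℕ) {ρ : ℝ} (hρ : 0 < ρ) {p : Plane × (ℕ × ℕ → ℝ)} (hp : p ∈ K t) :
    0 < Phi t ρ p := by
  have hp2 : (∑ α ∈ idx t, p.2 α ^ 2) = 1 := hp.2.1
  set f : Plane → ℝ := fun v => (q t p.2 (v + p.1)) ^ 2 with hf
  have hfc : Continuous f :=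
    ((continuous_q t p.2).comp (continuous_id.add continuous_const)).pow 2
  rw [Phi]
  apply (setIntegral_pos_iff_support_of_nonneg_ae ?_ ?_).2
  · have hopen : IsOpen (Function.support f ∩ ball (0 : Plane) ρ) :=
      hfc.isOpen_support.inter isOpen_ball
    have hne : (Function.support f ∩ ball (0 : Plane) ρ).Nonempty := by
      by_contra hcon
      rw [Set.not_nonempty_iff_eq_empty] at hcon
      have hzero : ∀ u ∈ ball p.1 ρ, q t p.2 u = 0 := by
        intro u hu
        have hv : u - p.1 ∈ ball (0 : Plane) ρ := by
          simp only [mem_ball, dist_eq_norm] at hu ⊢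
          simpa using hu
        have hvs : u - p.1 ∉ Function.support f := by
          intro hmem
          exact absurd (Set.mem_inter hmem hv) (by rw [hcon]; exact fun h => h)
        have : f (u - p.1) = 0 := Function.notMem_support.1 hvs
        have : (q t p.2 ((u - p.1) + p.1)) ^ 2 = 0 := this
        rw [sub_add_cancel] at this
        exact pow_eq_zero_iff (n := 2) (by norm_num) |>.1 this
      have hαz := vanish_ball hρ hzero
      have : (∑ α ∈ idx t, p.2 α ^ 2) = 0 :=
        Finset.sum_eq_zero fun α hα => by rw [hαz α hα]; ring
      rw [hp2] at this
      norm_num at this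
    exact hopen.measure_pos volume hne
  · apply (ae_restrict_mem measurableSet_ball).mono
    intro a _
    positivity
  · exact q_sq_integrableOn_ball t p.2 p.1 ρ

lemma exists_c0 (t : ℕ) {ρ : ℝ} (hρ : 0 < ρ) :
    ∃ c₀ > (0:ℝ), ∀ w : Plane, ‖w‖ ≤ 1 → ∀ g : ℕ × ℕ → ℝ,
      c₀ * (∑ α ∈ idx t, g α ^ 2) ≤ ∫ v in ball (0 : Plane) ρ, (q t g (v + w)) ^ 2 := by
  obtain ⟨p₀, hp₀K, hmin⟩ := (isCompact_K t).exists_isMinOn (K_nonempty t)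
    ((continuous_Phi t hρ).continuousOn)
  refine ⟨Phi t ρ p₀, Phi_pos t hρ hp₀K, ?_⟩
  intro w hw g
  set S := ∑ α ∈ idx t, g α ^ 2 with hS
  have hS0 : 0 ≤ S := Finset.sum_nonneg fun α _ => sq_nonneg _
  rcases eq_or_lt_of_le hS0 with hS0' | hSpos
  · have : Phi t ρ p₀ * S = 0 := by rw [← hS0']; ring
    rw [this]
    exact integral_nonneg fun v => sq_nonneg _
  · set s := Real.sqrt S with hs
    have hspos : 0 < s := Real.sqrt_pos.2 hSpos
    have hs2 : s ^ 2 = S := Real.sq_sqrt hS0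
    set G : ℕ × ℕ → ℝ := fun α => if α ∈ idx t then g α / s else 0 with hG
    have hGsum : (∑ α ∈ idx t, G α ^ 2) = 1 := by
      have heq : ∀ α ∈ idx t, G α ^ 2 = g α ^ 2 / S := by
        intro α hα
        rw [hG]
        simp only [if_pos hα]
        rw [div_pow, hs2]
      rw [Finset.sum_congr rfl heq, ← Finset.sum_div, ← hS, div_self (ne_of_gt hSpos)]
    have hmem : (w, G) ∈ K t := by
      refine ⟨?_, hGsum, ?_⟩
      · simpa [mem_closedBall, dist_eq_norm] using hw
      · intro α hα
        rw [hG]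
        simp [hα]
    have hq : ∀ u : Plane, q t g u = s * q t G u := by
      intro u
      rw [q, q, Finset.mul_sum]
      refine Finset.sum_congr rfl fun α hα => ?_
      rw [hG]
      simp only [if_pos hα]
      field_simp
    have hPhi : ∫ v in ball (0 : Plane) ρ, (q t g (v + w)) ^ 2 = S * Phi t ρ (w, G) := by
      rw [Phi]
      simp only
      rw [← integral_const_mul]
      refine integral_congr_ae (Filter.Eventually.of_forall fun v => ?_)
      show (q t g (v + w)) ^ 2 = S * (q t G (v + w)) ^ 2
      rw [hq (v + w), mul_pow, hs2]
    rw [hPhi]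
    calc Phi t ρ p₀ * S ≤ Phi t ρ (w, G) * S :=
          mul_le_mul_of_nonneg_right (hmin hmem) hS0
      _ = S * Phi t ρ (w, G) := mul_comm _ _

lemma upper_key (t : ℕ) (g : ℕ × ℕ → ℝ) :
    ∫ u in closedBall (0 : Plane) 1, (q t g u) ^ 2
      ≤ ((idx t).card * (volume (closedBall (0 : Plane) 1)).toReal) * ∑ α ∈ idx t, g α ^ 2 := by
  have hptwise : ∀ u ∈ closedBall (0 : Plane) 1,
      (q t g u) ^ 2 ≤ (idx t).card * ∑ α ∈ idx t, g α ^ 2 := by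
    intro u hu
    have hcoord : ∀ i : Fin 2, |u i| ≤ 1 := by
      intro i
      calc |u i| ≤ ‖u‖ := abs_coord_le_norm u i
        _ ≤ 1 := by simpa [mem_closedBall, dist_eq_norm] using hu
    calc (q t g u) ^ 2 ≤ (idx t).card * ∑ α ∈ idx t, (g α * u 0 ^ α.1 * u 1 ^ α.2) ^ 2 :=
          sq_sum_le_card_mul_sum_sq
      _ ≤ (idx t).card * ∑ α ∈ idx t, g α ^ 2 := by
          apply mul_le_mul_of_nonneg_left _ (Nat.cast_nonneg _)
          apply Finset.sum_le_sum
          intro α _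
          have h0 : (u 0) ^ 2 ≤ 1 := by nlinarith [hcoord 0, abs_nonneg (u 0), sq_abs (u 0)]
          have h1 : (u 1) ^ 2 ≤ 1 := by nlinarith [hcoord 1, abs_nonneg (u 1), sq_abs (u 1)]
          have hx : (u 0 ^ α.1) ^ 2 ≤ 1 := by
            rw [← pow_right_comm]
            exact pow_le_one₀ (sq_nonneg _) h0
          have hy : (u 1 ^ α.2) ^ 2 ≤ 1 := by
            rw [← pow_right_comm]
            exact pow_le_one₀ (sq_nonneg _) h1
          have hxy : (u 0 ^ α.1) ^ 2 * (u 1 ^ α.2) ^ 2 ≤ 1 := by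
            nlinarith [sq_nonneg (u 0 ^ α.1), sq_nonneg (u 1 ^ α.2)]
          calc (g α * u 0 ^ α.1 * u 1 ^ α.2) ^ 2
              = g α ^ 2 * ((u 0 ^ α.1) ^ 2 * (u 1 ^ α.2) ^ 2) := by ring
            _ ≤ g α ^ 2 * 1 := mul_le_mul_of_nonneg_left hxy (sq_nonneg _)
            _ = g α ^ 2 := mul_one _
  have hint1 : IntegrableOn (fun u : Plane => (q t g u) ^ 2) (closedBall (0 : Plane) 1) :=
    ContinuousOn.integrableOn_compact (isCompact_closedBall _ _)
      ((continuous_q t g).pow 2).continuousOn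
  have hint2 : IntegrableOn (fun _ : Plane => ((idx t).card : ℝ) * ∑ α ∈ idx t, g α ^ 2)
      (closedBall (0 : Plane) 1) :=
    integrableOn_const measure_closedBall_lt_top.ne
  calc ∫ u in closedBall (0 : Plane) 1, (q t g u) ^ 2
      ≤ ∫ _ in closedBall (0 : Plane) 1, ((idx t).card : ℝ) * ∑ α ∈ idx t, g α ^ 2 :=
        setIntegral_mono_on hint1 hint2 measurableSet_closedBall hptwise
    _ = (volume (closedBall (0 : Plane) 1)).toReal * (((idx t).card : ℝ) * ∑ α ∈ idx t, g α ^ 2) := by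
        rw [setIntegral_const, smul_eq_mul, measureReal_def]
    _ = ((idx t).card * (volume (closedBall (0 : Plane) 1)).toReal) * ∑ α ∈ idx t, g α ^ 2 := by
        ring

lemma integral_scale_q (t : ℕ) (g : ℕ × ℕ → ℝ) {h : ℝ} (hh : 0 < h) (xE : Plane) (E : Set Plane)
    (hE : MeasurableSet E) :
    ∫ x in E, (q t g ((1/h) • (x - xE))) ^ 2
      = h ^ 2 * ∫ u in (fun u : Plane => xE + h • u) ⁻¹' E, (q t g u) ^ 2 :=
  integral_scale (fun u => (q t g u) ^ 2) hh xE E hE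

end SMAux

open SMAux

/-- Lemma 3.8 (norm equivalence): on an element `E` with `E ⊆ B̄(x_E, h)` containing a
ball of radius `ρ h`, the `L²(E)` norm of a polynomial of degree ≤ t, expanded in the
shifted and scaled monomial basis `((x - x_E)/h)^α`, is equivalent (with uniform
constants) to `h` times the `ℓ²` norm of its coefficient vector. -/
theorem scaled_monomial_l2_norm_equivalence (t : ℕ) (ρ : ℝ) (hρ : ρ ∈ Set.Ioo (0 : ℝ) 1) :
    ∃ c > (0 : ℝ), ∃ C > (0 : ℝ),
      ∀ h : ℝ, 0 < h →
      ∀ (xE : EuclideanSpace ℝ (Fin 2)) (E : Set (EuclideanSpace ℝ (Fin 2))),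
        IsOpen E → E ⊆ closedBall xE h → (∃ z : EuclideanSpace ℝ (Fin 2), ball z (ρ * h) ⊆ E) →
        ∀ g : ℕ × ℕ → ℝ,
          c * h ^ 2 * (∑ α ∈ (Finset.range (t+1) ×ˢ Finset.range (t+1)).filter
                (fun p => p.1 + p.2 ≤ t), g α ^ 2) ≤
            (∫ x in E, (∑ α ∈ (Finset.range (t+1) ×ˢ Finset.range (t+1)).filter
                (fun p => p.1 + p.2 ≤ t),
                g α * ((x 0 - xE 0) / h) ^ α.1 * ((x 1 - xE 1) / h) ^ α.2) ^ 2) ∧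
          (∫ x in E, (∑ α ∈ (Finset.range (t+1) ×ˢ Finset.range (t+1)).filter
                (fun p => p.1 + p.2 ≤ t),
                g α * ((x 0 - xE 0) / h) ^ α.1 * ((x 1 - xE 1) / h) ^ α.2) ^ 2) ≤
            C * h ^ 2 * (∑ α ∈ (Finset.range (t+1) ×ˢ Finset.range (t+1)).filter
                (fun p => p.1 + p.2 ≤ t), g α ^ 2) := by
  obtain ⟨hρ0, hρ1⟩ := hρ
  obtain ⟨c₀, hc₀, hlow⟩ := exists_c0 t hρ0
  set C₀ : ℝ := ((idx t).card : ℝ) * (volume (closedBall (0 : Plane) 1)).toReal with hC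
  have hC₀ : 0 < C₀ := by
    apply mul_pos
    · exact_mod_cast Finset.card_pos.2 ⟨(0,0), mem_idx_zero t⟩
    · exact ENNReal.toReal_pos (ne_of_gt (measure_closedBall_pos volume _ one_pos))
        measure_closedBall_lt_top.ne
  refine ⟨c₀, hc₀, C₀, hC₀, ?_⟩
  intro h hh xE E hEopen hEsub hEball g
  obtain ⟨z, hz⟩ := hEball
  have hidx : (Finset.range (t+1) ×ˢ Finset.range (t+1)).filter
      (fun p => p.1 + p.2 ≤ t) = idx t := rfl
  rw [hidx]
  have hq : ∀ x : Plane,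
      (∑ α ∈ idx t, g α * ((x 0 - xE 0) / h) ^ α.1 * ((x 1 - xE 1) / h) ^ α.2)
        = q t g ((1/h) • (x - xE)) := by
    intro x
    rw [q]
    refine Finset.sum_congr rfl fun α _ => ?_
    have e : ∀ i : Fin 2, ((1/h) • (x - xE)) i = (x i - xE i) / h := by
      intro i
      rw [PiLp.smul_apply, PiLp.sub_apply, smul_eq_mul]
      ring
    rw [e 0, e 1]
  simp only [hq]
  rw [integral_scale_q t g hh xE E hEopen.measurableSet]
  set E' : Set Plane := (fun u : Plane => xE + h • u) ⁻¹' E with hE'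
  set w : Plane := (1/h) • (z - xE) with hwdef
  have hE'sub : E' ⊆ closedBall (0 : Plane) 1 := by
    intro u hu
    have h1 : xE + h • u ∈ closedBall xE h := hEsub hu
    rw [mem_closedBall, dist_eq_norm] at h1
    have h2 : ‖xE + h • u - xE‖ = h * ‖u‖ := by
      rw [add_sub_cancel_left, norm_smul, Real.norm_eq_abs, abs_of_pos hh]
    rw [h2] at h1
    rw [mem_closedBall, dist_eq_norm, sub_zero]
    nlinarith
  have hball' : ball w ρ ⊆ E' := by
    intro u hu
    rw [mem_ball, dist_eq_norm] at hu
    show xE + h • u ∈ E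
    apply hz
    rw [mem_ball, dist_eq_norm]
    have hcompute : xE + h • u - z = h • (u - w) := by
      rw [hwdef, smul_sub, smul_smul]
      rw [mul_one_div_cancel hh.ne', one_smul]
      abel
    rw [hcompute, norm_smul, Real.norm_eq_abs, abs_of_pos hh]
    calc h * ‖u - w‖ < h * ρ := by nlinarith
      _ = ρ * h := mul_comm _ _
  have hwnorm : ‖w‖ ≤ 1 := by
    have hzE : z ∈ E := hz (mem_ball_self (by positivity))
    have h1 : ‖z - xE‖ ≤ h := by
      have := hEsub hzE
      rwa [mem_closedBall, dist_eq_norm] at this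
    rw [hwdef, norm_smul, Real.norm_eq_abs, abs_of_pos (by positivity : (0:ℝ) < 1/h)]
    rw [one_div]
    rw [inv_mul_le_iff₀ hh, mul_one]
    exact h1
  have hint : IntegrableOn (fun u : Plane => (q t g u) ^ 2) (closedBall (0 : Plane) 1) :=
    ContinuousOn.integrableOn_compact (isCompact_closedBall _ _)
      ((continuous_q t g).pow 2).continuousOn
  have hintE' : IntegrableOn (fun u : Plane => (q t g u) ^ 2) E' :=
    hint.mono_set hE'sub
  have hnonnegE' : 0 ≤ᵐ[volume.restrict E'] (fun u : Plane => (q t g u) ^ 2) :=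
    Filter.Eventually.of_forall fun u => sq_nonneg _
  have hnonnegCB : 0 ≤ᵐ[volume.restrict (closedBall (0 : Plane) 1)]
      (fun u : Plane => (q t g u) ^ 2) :=
    Filter.Eventually.of_forall fun u => sq_nonneg _
  constructor
  · -- lower bound
    have step1 : c₀ * (∑ α ∈ idx t, g α ^ 2)
        ≤ ∫ v in ball (0 : Plane) ρ, (q t g (v + w)) ^ 2 := hlow w hwnorm g
    have step2 : ∫ v in ball (0 : Plane) ρ, (q t g (v + w)) ^ 2
        = ∫ u in ball w ρ, (q t g u) ^ 2 :=
      (integral_ball_translate (fun u => (q t g u) ^ 2) w ρ).symm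
    have step3 : ∫ u in ball w ρ, (q t g u) ^ 2 ≤ ∫ u in E', (q t g u) ^ 2 :=
      setIntegral_mono_set hintE' hnonnegE' (HasSubset.Subset.eventuallyLE hball')
    have : c₀ * (∑ α ∈ idx t, g α ^ 2) ≤ ∫ u in E', (q t g u) ^ 2 := by
      rw [step2] at step1
      linarith
    calc c₀ * h ^ 2 * (∑ α ∈ idx t, g α ^ 2)
        = h ^ 2 * (c₀ * (∑ α ∈ idx t, g α ^ 2)) := by ring
      _ ≤ h ^ 2 * ∫ u in E', (q t g u) ^ 2 := by
          apply mul_le_mul_of_nonneg_left this (by positivity)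
  · -- upper bound
    have step1 : ∫ u in E', (q t g u) ^ 2
        ≤ ∫ u in closedBall (0 : Plane) 1, (q t g u) ^ 2 :=
      setIntegral_mono_set hint hnonnegCB (HasSubset.Subset.eventuallyLE hE'sub)
    have step2 := upper_key t g
    calc h ^ 2 * ∫ u in E', (q t g u) ^ 2
        ≤ h ^ 2 * (C₀ * ∑ α ∈ idx t, g α ^ 2) := by
          apply mul_le_mul_of_nonneg_left (le_trans step1 step2) (by positivity)
      _ = C₀ * h ^ 2 * (∑ α ∈ idx t, g α ^ 2) := by ring
end
end

section
/- Let U ⊆ ℝ² be a bounded open set. Let v₁ : ℝ² → ℝ be four times continuously differentiable on U, biharmonic on U (i.e. Δ²v₁ = Δ(Δv₁) = 0 on U), and with square-integrable Hessian on U, i.e. ∫_U Σ_{i,j=1}^2 (∂_i∂_j v₁)² dx < ∞. Let v₂ : ℝ² → ℝ be smooth with compact support contained in U, and set v = v₁ + v₂. Then the decomposition is H²-orthogonal: ∫_U Σ_{i,j=1}^2 (∂_i∂_j v)² dx = ∫_U Σ_{i,j=1}^2 (∂_i∂_j v₁)² dx + ∫_U Σ_{i,j=1}^2 (∂_i∂_j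 v₂)² dx. -/
open MeasureTheory Metric Set

noncomputable section

/-- Second partial derivative `∂_i ∂_j u` of `u : ℝ² → ℝ`. -/
def pd2 (u : EuclideanSpace ℝ (Fin 2) → ℝ) (i j : Fin 2)
    (x : EuclideanSpace ℝ (Fin 2)) : ℝ :=
  fderiv ℝ (fun y => fderiv ℝ u y (EuclideanSpace.single i 1)) x (EuclideanSpace.single j 1)

/-- Laplacian of `u : ℝ² → ℝ`. -/
def lap (u : EuclideanSpace ℝ (Fin 2) → ℝ) (x : EuclideanSpace ℝ (Fin 2)) : ℝ :=
  ∑ i : Fin 2, pd2 u i i x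

/-- Bilaplacian `Δ²u = Δ(Δu)` of `u : ℝ² → ℝ`. -/
def bilap (u : EuclideanSpace ℝ (Fin 2) → ℝ) (x : EuclideanSpace ℝ (Fin 2)) : ℝ :=
  lap (lap u) x

namespace H2Aux

abbrev EE := EuclideanSpace ℝ (Fin 2)
abbrev ee (i : Fin 2) : EE := EuclideanSpace.single i 1

/-- Directional derivative in the `i`-th coordinate direction. -/
def d1 (u : EE → ℝ) (i : Fin 2) : EE → ℝ := fun x => fderiv ℝ u x (ee i)

lemma pd2_eq (u : EE → ℝ) (i j : Fin 2) : pd2 u i j = d1 (d1 u i) j := rfl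

lemma contDiffAt_d1 {u : EE → ℝ} {i : Fin 2} {x : EE} {n m : WithTop ℕ∞}
    (h : ContDiffAt ℝ n u x) (hm : m + 1 ≤ n) : ContDiffAt ℝ m (d1 u i) x :=
  (h.fderiv_right hm).clm_apply contDiffAt_const

lemma contDiff_d1 {u : EE → ℝ} {i : Fin 2} {n m : WithTop ℕ∞}
    (h : ContDiff ℝ n u) (hm : m + 1 ≤ n) : ContDiff ℝ m (d1 u i) :=
  (h.fderiv_right hm).clm_apply contDiff_const

lemma contDiffOn_d1 {u : EE → ℝ} {i : Fin 2} {U : Set EE} (hU : IsOpen U) {n m : WithTop ℕ∞}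
    (h : ContDiffOn ℝ n u U) (hm : m + 1 ≤ n) : ContDiffOn ℝ m (d1 u i) U :=
  (h.fderiv_of_isOpen hU hm).clm_apply contDiffOn_const

/-- Schwarz symmetry for `d1`. -/
lemma d1_symm {u : EE → ℝ} {i j : Fin 2} {x : EE} (h : ContDiffAt ℝ 2 u x) :
    d1 (d1 u i) j x = d1 (d1 u j) i x := by
  have hd : DifferentiableAt ℝ (fderiv ℝ u) x :=
    (h.fderiv_right (m := 1) (by norm_num)).differentiableAt one_ne_zero
  have h1 : ∀ a b : Fin 2, d1 (d1 u a) b x = fderiv ℝ (fderiv ℝ u) x (ee b) (ee a) := by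
    intro a b
    have := fderiv_clm_apply (𝕜 := ℝ) hd (differentiableAt_const (ee a))
    have hda : d1 u a = fun y => fderiv ℝ u y (ee a) := rfl
    simp only [d1, hda]
    rw [this]
    simp
  rw [h1, h1, (h.isSymmSndFDerivAt (by simp)).eq]

lemma d1_congr_on {u v : EE → ℝ} {i : Fin 2} {O : Set EE} (hO : IsOpen O)
    (h : EqOn u v O) : EqOn (d1 u i) (d1 v i) O := by
  intro x hx
  have : u =ᶠ[nhds x] v := Filter.eventuallyEq_of_mem (hO.mem_nhds hx) h
  simp only [d1, this.fderiv_eq]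

lemma support_d1 {u : EE → ℝ} {i : Fin 2} : tsupport (d1 u i) ⊆ tsupport u := by
  apply closure_minimal _ (isClosed_tsupport _)
  intro x hx
  simp only [d1, Function.mem_support] at hx
  have : fderiv ℝ u x ≠ 0 := fun h => hx (by simp [h])
  exact support_fderiv_subset ℝ this

lemma hcs_d1 {u : EE → ℝ} {i : Fin 2} (h : HasCompactSupport u) : HasCompactSupport (d1 u i) :=
  h.of_isClosed_subset (isClosed_tsupport _) support_d1

lemma hcs_mul {a b : EE → ℝ} (hb : HasCompactSupport b) :
    HasCompactSupport (fun x => a x * b x) := by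
  apply hb.of_isClosed_subset (isClosed_tsupport _)
  apply closure_mono
  intro x hx
  simp only [Function.mem_support] at hx ⊢
  intro h; exact hx (by simp [h])

lemma d1_sum {f : Fin 2 → EE → ℝ} {j : Fin 2} {x : EE}
    (h : ∀ i, DifferentiableAt ℝ (f i) x) :
    d1 (fun y => ∑ i, f i y) j x = ∑ i, d1 (f i) j x := by
  simp only [d1]
  rw [fderiv_fun_sum (fun i _ => h i)]
  simp

lemma d1_add {f g : EE → ℝ} {j : Fin 2} {x : EE}
    (hf : DifferentiableAt ℝ f x) (hg : DifferentiableAt ℝ g x) :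
    d1 (fun y => f y + g y) j x = d1 f j x + d1 g j x := by
  simp only [d1]
  rw [fderiv_fun_add hf hg]; simp

/-- Single integration-by-parts step over `ℝ²`. -/
lemma ibp_step {f g : EE → ℝ} {k : Fin 2}
    (hf : ContDiff ℝ 1 f) (hg : ContDiff ℝ 2 g) (hgc : HasCompactSupport g) :
    ∫ x, f x * d1 g k x = - ∫ x, d1 f k x * g x := by
  have h1 : Continuous (d1 f k) := (contDiff_d1 (m := 0) hf (by norm_num)).continuous
  have h2 : Continuous (d1 g k) := (contDiff_d1 (m := 1) hg (by norm_num)).continuous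
  have i1 : Integrable (fun x => d1 f k x * g x) :=
    ((h1.mul hg.continuous).integrable_of_hasCompactSupport (hcs_mul hgc))
  have i2 : Integrable (fun x => f x * d1 g k x) :=
    ((hf.continuous.mul h2).integrable_of_hasCompactSupport (hcs_mul (hcs_d1 hgc)))
  have i3 : Integrable (fun x => f x * g x) :=
    ((hf.continuous.mul hg.continuous).integrable_of_hasCompactSupport (hcs_mul hgc))
  exact integral_mul_fderiv_eq_neg_fderiv_mul_of_integrable i1 i2 i3
    (fun x _ => hf.differentiable one_ne_zero x) (fun x _ => hg.differentiable (by norm_num) x)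

lemma abs_mul_le_half (a b : ℝ) : |a * b| ≤ (a ^ 2 + b ^ 2) / 2 := by
  rw [abs_mul]
  nlinarith [sq_nonneg (|a| - |b|), sq_abs a, sq_abs b, abs_nonneg a, abs_nonneg b]

end H2Aux
open H2Aux

/-- Lemma 3.9 (smooth version of the `H²`-orthogonal decomposition): if `v₁` is
biharmonic on a bounded open `U` with square-integrable Hessian and `v₂` is smooth
with compact support in `U`, then `|v₁ + v₂|²_{2,U} = |v₁|²_{2,U} + |v₂|²_{2,U}`. -/
theorem H2_orthogonal_decomposition
    (U : Set (EuclideanSpace ℝ (Fin 2))) (hU : IsOpen U)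
    (hUb : Bornology.IsBounded U)
    (v₁ v₂ : EuclideanSpace ℝ (Fin 2) → ℝ)
    (hv₁ : ContDiffOn ℝ 4 v₁ U)
    (hbiharm : ∀ x ∈ U, bilap v₁ x = 0)
    (hint : IntegrableOn (fun x => ∑ i : Fin 2, ∑ j : Fin 2, (pd2 v₁ i j x) ^ 2) U)
    (hv₂ : ContDiff ℝ (⊤ : ℕ∞) v₂) (hv₂c : HasCompactSupport v₂) (hv₂U : tsupport v₂ ⊆ U) :
    (∫ x in U, ∑ i : Fin 2, ∑ j : Fin 2, (pd2 (fun y => v₁ y + v₂ y) i j x) ^ 2) =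
      (∫ x in U, ∑ i : Fin 2, ∑ j : Fin 2, (pd2 v₁ i j x) ^ 2) +
        ∫ x in U, ∑ i : Fin 2, ∑ j : Fin 2, (pd2 v₂ i j x) ^ 2 := by
  have hv₂4 : ContDiff ℝ 4 v₂ := hv₂.of_le (le_trans (by norm_num : (4 : WithTop ℕ∞) ≤ ((4 : ℕ∞) : WithTop ℕ∞))
    (WithTop.coe_le_coe.mpr le_top))
  have hv₂diff : Differentiable ℝ v₂ := hv₂4.differentiable (by norm_num)
  have hv1At : ∀ x ∈ U, ContDiffAt ℝ 4 v₁ x := fun x hx => hv₁.contDiffAt (hU.mem_nhds hx)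
  -- vanishing of second derivatives of v₂ off its support
  have hpd2v₂0 : ∀ x ∉ tsupport v₂, ∀ i j : Fin 2, pd2 v₂ i j x = 0 := by
    intro x hx i j
    rw [pd2_eq]
    exact image_eq_zero_of_notMem_tsupport fun h => hx (support_d1 (support_d1 h))
  -- continuity of second derivatives
  have hpd2v₂cont : ∀ i j : Fin 2, Continuous (pd2 v₂ i j) := fun i j => by
    rw [pd2_eq]
    exact (contDiff_d1 (m := 0) (contDiff_d1 (m := 1) hv₂4 (by norm_num)) (by norm_num)).continuous
  have hpd2v₁cont : ∀ i j : Fin 2, ContinuousOn (pd2 v₁ i j) U := fun i j => by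
    rw [pd2_eq]
    exact (contDiffOn_d1 (m := 0) hU (contDiffOn_d1 (m := 3) hU hv₁ (by norm_num))
      (by norm_num)).continuousOn
  -- Step 1: pointwise additivity of pd2 on U
  have hpd_add : ∀ x ∈ U, ∀ i j : Fin 2,
      pd2 (fun y => v₁ y + v₂ y) i j x = pd2 v₁ i j x + pd2 v₂ i j x := by
    intro x hx i j
    have level1 : EqOn (d1 (fun y => v₁ y + v₂ y) i) (fun y => d1 v₁ i y + d1 v₂ i y) U := by
      intro y hy
      exact d1_add ((hv1At y hy).differentiableAt (by norm_num)) (hv₂diff y)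
    rw [pd2_eq, pd2_eq, pd2_eq]
    have e1 : d1 (d1 (fun y => v₁ y + v₂ y) i) j x
        = d1 (fun y => d1 v₁ i y + d1 v₂ i y) j x := d1_congr_on hU level1 hx
    rw [e1]
    exact d1_add
      ((contDiffAt_d1 (m := 3) (hv1At x hx) (by norm_num)).differentiableAt (by norm_num))
      ((contDiff_d1 (m := 3) hv₂4 (by norm_num)).differentiable (by norm_num) x)
  -- the cross term
  set P : EE → ℝ := fun x => ∑ i : Fin 2, ∑ j : Fin 2, pd2 v₁ i j x * pd2 v₂ i j x with hP
  -- Step 2: integrability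
  have intB : IntegrableOn (fun x => ∑ i : Fin 2, ∑ j : Fin 2, (pd2 v₂ i j x) ^ 2) U := by
    apply Integrable.integrableOn
    apply Continuous.integrable_of_hasCompactSupport
    · exact continuous_finset_sum _ fun i _ =>
        continuous_finset_sum _ fun j _ => (hpd2v₂cont i j).pow 2
    · apply hv₂c.of_isClosed_subset (isClosed_tsupport _)
      apply closure_minimal _ (isClosed_tsupport _)
      intro x hx
      by_contra hxs
      apply hx
      simp only [hpd2v₂0 x hxs]
      simp
  have intP : IntegrableOn P U := by
    have hmeas : AEStronglyMeasurable P (volume.restrict U) := by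
      apply ContinuousOn.aestronglyMeasurable _ hU.measurableSet
      exact continuousOn_finset_sum _ fun i _ => continuousOn_finset_sum _ fun j _ =>
        (hpd2v₁cont i j).mul (hpd2v₂cont i j).continuousOn
    apply Integrable.mono' (g := fun x =>
      ((∑ i : Fin 2, ∑ j : Fin 2, (pd2 v₁ i j x) ^ 2)
        + ∑ i : Fin 2, ∑ j : Fin 2, (pd2 v₂ i j x) ^ 2) / 2)
      ((hint.add intB).div_const 2) hmeas
    apply Filter.Eventually.of_forall
    intro x
    simp only [hP, Real.norm_eq_abs]
    calc |∑ i : Fin 2, ∑ j : Fin 2, pd2 v₁ i j x * pd2 v₂ i j x|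
        ≤ ∑ i : Fin 2, ∑ j : Fin 2, |pd2 v₁ i j x * pd2 v₂ i j x| := by
          refine (Finset.abs_sum_le_sum_abs _ _).trans ?_
          exact Finset.sum_le_sum fun i _ => Finset.abs_sum_le_sum_abs _ _
      _ ≤ ∑ i : Fin 2, ∑ j : Fin 2, ((pd2 v₁ i j x) ^ 2 + (pd2 v₂ i j x) ^ 2) / 2 :=
          Finset.sum_le_sum fun i _ => Finset.sum_le_sum fun j _ => abs_mul_le_half _ _
      _ = ((∑ i : Fin 2, ∑ j : Fin 2, (pd2 v₁ i j x) ^ 2)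
            + ∑ i : Fin 2, ∑ j : Fin 2, (pd2 v₂ i j x) ^ 2) / 2 := by
          simp only [Fin.sum_univ_two]
          ring
  -- Step 3: split the LHS
  have hsplit : (∫ x in U, ∑ i : Fin 2, ∑ j : Fin 2, (pd2 (fun y => v₁ y + v₂ y) i j x) ^ 2)
      = (∫ x in U, ∑ i : Fin 2, ∑ j : Fin 2, (pd2 v₁ i j x) ^ 2)
        + (∫ x in U, ∑ i : Fin 2, ∑ j : Fin 2, (pd2 v₂ i j x) ^ 2)
        + 2 * ∫ x in U, P x := by
    have hsq : EqOn (fun x => ∑ i : Fin 2, ∑ j : Fin 2, (pd2 (fun y => v₁ y + v₂ y) i j x) ^ 2)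
        (fun x => ((∑ i : Fin 2, ∑ j : Fin 2, (pd2 v₁ i j x) ^ 2)
          + ∑ i : Fin 2, ∑ j : Fin 2, (pd2 v₂ i j x) ^ 2) + 2 * P x) U := by
      intro x hx
      simp only [hP]
      rw [← Finset.sum_add_distrib, Finset.mul_sum, ← Finset.sum_add_distrib]
      refine Finset.sum_congr rfl fun i _ => ?_
      rw [← Finset.sum_add_distrib, Finset.mul_sum, ← Finset.sum_add_distrib]
      refine Finset.sum_congr rfl fun j _ => ?_
      rw [hpd_add x hx i j]; ring
    have i12 : IntegrableOn (fun x => (∑ i : Fin 2, ∑ j : Fin 2, (pd2 v₁ i j x) ^ 2)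
        + ∑ i : Fin 2, ∑ j : Fin 2, (pd2 v₂ i j x) ^ 2) U := hint.add intB
    have iP2 : IntegrableOn (fun x => 2 * P x) U := intP.const_mul 2
    rw [setIntegral_congr_fun hU.measurableSet hsq, integral_add i12 iP2,
      integral_add hint intB, integral_const_mul]
  rw [hsplit]
  -- Step 4: the cross term vanishes
  have hcross : (∫ x in U, P x) = 0 := by
    -- construct a cutoff function χ equal to 1 near the support of v₂
    obtain ⟨L, Lcomp, KintL, LU⟩ := exists_compact_between hv₂c hU hv₂U
    obtain ⟨χ₀, hχ1, hχ0, -⟩ :=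
      exists_contMDiffMap_one_nhds_of_subset_interior (modelWithCornersSelf ℝ EE) (n := (⊤ : ℕ∞))
        (isClosed_tsupport v₂) KintL
    set χ : EE → ℝ := ⇑χ₀ with hχdef
    have hχ : ContDiff ℝ (⊤ : ℕ∞) χ := χ₀.contMDiff.contDiff
    obtain ⟨W₀, hW₀o, hKW₀, hW₀⟩ := eventually_nhdsSet_iff_exists.mp hχ1
    set W := W₀ ∩ interior L with hWdef
    set w : EE → ℝ := fun x => χ x * v₁ x with hwdef
    have hsuppχ : tsupport χ ⊆ L := closure_minimal (fun x hx => by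
        by_contra hxL
        exact hx (hχ0 x fun h => hxL h)) Lcomp.isClosed
    have hχc : HasCompactSupport χ := Lcomp.of_isClosed_subset (isClosed_tsupport _) hsuppχ
    have hWU : W ⊆ U := inter_subset_right.trans (interior_subset.trans LU)
    have hWo : IsOpen W := hW₀o.inter isOpen_interior
    have hKW : tsupport v₂ ⊆ W := subset_inter hKW₀ KintL
    have hwv₁ : EqOn w v₁ W := fun x hx => by simp only [hwdef, hW₀ x hx.1, one_mul]
    have hw4 : ContDiff ℝ 4 w := by
      rw [contDiff_iff_contDiffAt]
      intro x
      by_cases hx : x ∈ U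
      · exact (hχ.of_le (by norm_cast)).contDiffAt.mul (hv₁.contDiffAt (hU.mem_nhds hx))
      · have hxL : x ∈ (Lᶜ : Set EE) := fun h => hx (LU h)
        have hev : ∀ᶠ y in nhds x, w y = 0 := by
          filter_upwards [Lcomp.isClosed.isOpen_compl.mem_nhds hxL] with y hy
          simp [hwdef, hχ0 y hy]
        exact (contDiffAt_const (c := (0:ℝ))).congr_of_eventuallyEq hev
    -- smoothness bookkeeping for derivatives of w
    have hw3 : ∀ i, ContDiff ℝ 3 (d1 w i) := fun i => contDiff_d1 (m := 3) hw4 (by norm_num)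
    have hw2 : ∀ i j, ContDiff ℝ 2 (d1 (d1 w i) j) :=
      fun i j => contDiff_d1 (m := 2) (hw3 i) (by norm_num)
    have hw1 : ∀ i j k, ContDiff ℝ 1 (d1 (d1 (d1 w i) j) k) :=
      fun i j k => contDiff_d1 (m := 1) (hw2 i j) (by norm_num)
    -- pd2 w = pd2 v₁ on W
    have hpdW : ∀ i j : Fin 2, EqOn (pd2 w i j) (pd2 v₁ i j) W := fun i j => by
      rw [pd2_eq, pd2_eq]
      exact d1_congr_on hWo (d1_congr_on hWo hwv₁)
    -- continuity and compact support facts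
    have hpd2v₂cs : ∀ i j : Fin 2, HasCompactSupport (pd2 v₂ i j) := fun i j => by
      rw [pd2_eq]; exact hcs_d1 (hcs_d1 hv₂c)
    have hpd2wcont : ∀ i j : Fin 2, Continuous (pd2 w i j) := fun i j => by
      rw [pd2_eq]; exact (hw2 i j).continuous
    have hint2 : ∀ i j : Fin 2, Integrable (fun x => pd2 w i j x * pd2 v₂ i j x) := fun i j =>
      ((hpd2wcont i j).mul (hpd2v₂cont i j)).integrable_of_hasCompactSupport
        (hcs_mul (hpd2v₂cs i j))
    have hint4 : ∀ i j : Fin 2,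
        Integrable (fun x => d1 (d1 (d1 (d1 w i) j) j) i x * v₂ x) := fun i j =>
      (((contDiff_d1 (m := 0) (hw1 i j j) (by norm_num)).continuous.mul
        hv₂.continuous).integrable_of_hasCompactSupport (hcs_mul hv₂c))
    -- rewrite P via w and move to whole space
    have hPP' : P = fun x => ∑ i : Fin 2, ∑ j : Fin 2, pd2 w i j x * pd2 v₂ i j x := by
      funext x
      by_cases hx : x ∈ W
      · exact Finset.sum_congr rfl fun i _ => Finset.sum_congr rfl fun j _ => by
          rw [hpdW i j hx]
      · have hxK : x ∉ tsupport v₂ := fun h => hx (hKW h)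
        simp [hP, hpd2v₂0 x hxK]
    have h1 : (∫ x in U, P x)
        = ∫ x, ∑ i : Fin 2, ∑ j : Fin 2, pd2 w i j x * pd2 v₂ i j x := by
      rw [hPP']
      apply setIntegral_eq_integral_of_forall_compl_eq_zero
      intro x hx
      have hxK : x ∉ tsupport v₂ := fun h => hx (hv₂U h)
      simp [hpd2v₂0 x hxK]
    -- double integration by parts
    have hibp : ∀ i j : Fin 2, (∫ x, pd2 w i j x * pd2 v₂ i j x)
        = ∫ x, d1 (d1 (d1 (d1 w i) j) j) i x * v₂ x := by
      intro i j
      have e1 : (∫ x, pd2 w i j x * pd2 v₂ i j x)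
          = - ∫ x, d1 (d1 (d1 w i) j) j x * d1 v₂ i x := by
        simp only [pd2_eq]
        exact ibp_step ((hw2 i j).of_le (by norm_num))
          (contDiff_d1 (m := 2) hv₂4 (by norm_num)) (hcs_d1 hv₂c)
      have e2 : (∫ x, d1 (d1 (d1 w i) j) j x * d1 v₂ i x)
          = - ∫ x, d1 (d1 (d1 (d1 w i) j) j) i x * v₂ x :=
        ibp_step (hw1 i j j) (hv₂4.of_le (by norm_num)) hv₂c
      rw [e1, e2, neg_neg]
    -- symmetry of fourth derivatives
    have hsym : ∀ (i j : Fin 2) (x : EE), d1 (d1 (d1 (d1 w i) j) j) i x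
        = d1 (d1 (d1 (d1 w i) i) j) j x := by
      intro i j x
      have h1 : d1 (d1 (d1 (d1 w i) j) j) i x = d1 (d1 (d1 (d1 w i) j) i) j x :=
        d1_symm (hw2 i j).contDiffAt
      have h2 : d1 (d1 (d1 w i) j) i = d1 (d1 (d1 w i) i) j := by
        funext y
        exact d1_symm ((hw3 i).contDiffAt.of_le (by norm_num))
      rw [h1, h2]
    -- bilaplacian of w as a sum of fourth derivatives
    have hbilapw : ∀ x, bilap w x
        = ∑ j : Fin 2, ∑ i : Fin 2, d1 (d1 (d1 (d1 w i) i) j) j x := by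
      intro x
      have hl : lap w = fun y => ∑ i : Fin 2, d1 (d1 w i) i y := rfl
      have hs2 : ∀ j : Fin 2, d1 (lap w) j
          = fun y => ∑ i : Fin 2, d1 (d1 (d1 w i) i) j y := by
        intro j
        funext y
        rw [hl]
        exact d1_sum fun i => ((hw2 i i).differentiable (by norm_num)) y
      show ∑ j : Fin 2, d1 (d1 (lap w) j) j x = _
      refine Finset.sum_congr rfl fun j _ => ?_
      rw [hs2 j]
      exact d1_sum fun i => ((hw1 i i j).differentiable one_ne_zero) x
    -- bilap w = bilap v₁ on W
    have hlapW : EqOn (lap w) (lap v₁) W := fun x hx =>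
      Finset.sum_congr rfl fun i _ => hpdW i i hx
    have hbilapW : EqOn (bilap w) (bilap v₁) W := by
      intro x hx
      show ∑ j : Fin 2, pd2 (lap w) j j x = ∑ j : Fin 2, pd2 (lap v₁) j j x
      refine Finset.sum_congr rfl fun j _ => ?_
      rw [pd2_eq, pd2_eq]
      exact d1_congr_on hWo (d1_congr_on hWo hlapW) hx
    -- the integrand of the final integral vanishes identically
    have hzero : ∀ x : EE,
        (∑ i : Fin 2, ∑ j : Fin 2, d1 (d1 (d1 (d1 w i) j) j) i x * v₂ x) = 0 := by
      intro x
      by_cases hv : v₂ x = 0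
      · simp [hv]
      · have hxW : x ∈ W := hKW (subset_tsupport v₂ (by simpa [Function.mem_support] using hv))
        have hxU : x ∈ U := hWU hxW
        have hsum0 : (∑ i : Fin 2, ∑ j : Fin 2, d1 (d1 (d1 (d1 w i) j) j) i x) = 0 := by
          calc (∑ i : Fin 2, ∑ j : Fin 2, d1 (d1 (d1 (d1 w i) j) j) i x)
              = ∑ i : Fin 2, ∑ j : Fin 2, d1 (d1 (d1 (d1 w i) i) j) j x :=
                Finset.sum_congr rfl fun i _ => Finset.sum_congr rfl fun j _ => hsym i j x
            _ = ∑ j : Fin 2, ∑ i : Fin 2, d1 (d1 (d1 (d1 w i) i) j) j x := Finset.sum_comm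
            _ = bilap w x := (hbilapw x).symm
            _ = bilap v₁ x := hbilapW hxW
            _ = 0 := hbiharm x hxU
        calc (∑ i : Fin 2, ∑ j : Fin 2, d1 (d1 (d1 (d1 w i) j) j) i x * v₂ x)
            = (∑ i : Fin 2, ∑ j : Fin 2, d1 (d1 (d1 (d1 w i) j) j) i x) * v₂ x := by
              rw [Finset.sum_mul]
              exact Finset.sum_congr rfl fun i _ => (Finset.sum_mul _ _ _).symm
          _ = 0 := by rw [hsum0, zero_mul]
    -- put everything together
    rw [h1]
    calc (∫ x, ∑ i : Fin 2, ∑ j : Fin 2, pd2 w i j x * pd2 v₂ i j x)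
        = ∑ i : Fin 2, ∑ j : Fin 2, ∫ x, pd2 w i j x * pd2 v₂ i j x := by
          rw [integral_finset_sum _ fun i _ => integrable_finset_sum _ fun j _ => hint2 i j]
          exact Finset.sum_congr rfl fun i _ => integral_finset_sum _ fun j _ => hint2 i j
      _ = ∑ i : Fin 2, ∑ j : Fin 2, ∫ x, d1 (d1 (d1 (d1 w i) j) j) i x * v₂ x :=
          Finset.sum_congr rfl fun i _ => Finset.sum_congr rfl fun j _ => hibp i j
      _ = ∫ x, ∑ i : Fin 2, ∑ j : Fin 2, d1 (d1 (d1 (d1 w i) j) j) i x * v₂ x := by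
          rw [integral_finset_sum _ fun i _ => integrable_finset_sum _ fun j _ => hint4 i j]
          exact Finset.sum_congr rfl fun i _ => (integral_finset_sum _ fun j _ => hint4 i j).symm
      _ = 0 := by
          simp only [hzero]
          exact integral_zero _ _
  rw [hcross]; ring

end
end
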